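/- arXiv:2205.00642 — 8 statements merged into one kernel-verified Lean document; each statement's English description precedes it below -/
import Mathlib

section
/- Let w be an odd positive integer that is not a perfect square, and let x, y be integers with 0 ≤ x, y < w/2 and x² + y² ≡ −1 (mod w). Let z = (x+yi)/w have Hurwitz continued fraction expansion [a₀; a₁, …, a_m] with associated Q-pair (P_k, Q_k). Then there exists exactly one index n with 0 ≤ n < m such that |Q_n| ≤ √w < |Q_{n+1}|. -/
open Complex

lemma hcf_sq_add_sq_ne_three (p q : ℤ) : p * p + q * q ≠ 3 := by
  intro h
  have hp1 : -1 ≤ p := by nlinarith [mul_self_nonneg q, mul_self_nonneg p]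
  have hp2 : p ≤ 1 := by nlinarith [mul_self_nonneg q, mul_self_nonneg p]
  have hq1 : -1 ≤ q := by nlinarith [mul_self_nonneg q, mul_self_nonneg p]
  have hq2 : q ≤ 1 := by nlinarith [mul_self_nonneg q, mul_self_nonneg p]
  interval_cases p <;> interval_cases q <;> omega

lemma hcf_q_id (γ X Y : ℂ) (hγ : normSq γ = 2) :
    normSq (X + γ * Y) + normSq X = normSq (Y + (starRingEnd ℂ) γ * X) + normSq Y := by
  have hc : γ.re ^ 2 + γ.im ^ 2 = 2 := by
    simpa [Complex.normSq_apply, sq] using hγ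
  simp only [Complex.normSq_apply, Complex.add_re, Complex.add_im, Complex.mul_re,
    Complex.mul_im, Complex.conj_re, Complex.conj_im]
  linear_combination (Y.re ^ 2 + Y.im ^ 2 - X.re ^ 2 - X.im ^ 2) * hc

lemma hcf_inv_disk {Z c : ℂ} (hZ : Z ≠ 0) (hc : normSq c = 2)
    (h : normSq (Z - c) < 1) : normSq (Z⁻¹ - (starRingEnd ℂ) c) < 1 := by
  have h0 : 0 < normSq Z := Complex.normSq_pos.2 hZ
  have e : (Z⁻¹ - (starRingEnd ℂ) c) * Z = 1 - (starRingEnd ℂ) c * Z := by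
    rw [sub_mul, inv_mul_cancel₀ hZ]
  have e2 : normSq (Z⁻¹ - (starRingEnd ℂ) c) * normSq Z
      = normSq (1 - (starRingEnd ℂ) c * Z) := by
    rw [← Complex.normSq_mul, e]
  have hc' : c.re ^ 2 + c.im ^ 2 = 2 := by
    simpa [Complex.normSq_apply, sq] using hc
  have e3 : normSq (1 - (starRingEnd ℂ) c * Z) = normSq (Z - c) - 1 + normSq Z := by
    simp only [Complex.normSq_apply, Complex.sub_re, Complex.sub_im, Complex.mul_re,
      Complex.mul_im, Complex.one_re, Complex.one_im, Complex.conj_re, Complex.conj_im]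
    linear_combination (Z.re ^ 2 + Z.im ^ 2 - 1) * hc'
  have hfin : normSq (Z⁻¹ - (starRingEnd ℂ) c) * normSq Z < 1 * normSq Z := by
    rw [e2, e3, one_mul]; linarith
  exact lt_of_mul_lt_mul_right hfin (le_of_lt h0)

lemma hcf_tri (h u v : ℂ) (hn : 2 ≤ ‖h‖) (huv : ‖u‖ ≤ ‖v‖) :
    normSq v ≤ normSq (u + h * v) := by
  have t0 : u + h * v + -u = h * v := by ring
  have t1 : ‖(h * v)‖ ≤ ‖(u + h * v)‖ + ‖u‖ := by
    calc ‖(h * v)‖ = ‖(u + h * v) + (-u)‖ := by rw [t0]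
    _ ≤ ‖(u + h * v)‖ + ‖(-u)‖ := norm_add_le _ _
    _ = ‖(u + h * v)‖ + ‖u‖ := by rw [norm_neg]
  have t2 : ‖h‖ * ‖v‖ = ‖(h * v)‖ := (norm_mul _ _).symm
  have hv0 : 0 ≤ ‖v‖ := norm_nonneg _
  have t3 : ‖v‖ ≤ ‖(u + h * v)‖ := by nlinarith
  calc normSq v = ‖v‖ ^ 2 := (Complex.sq_norm v).symm
  _ ≤ ‖(u + h * v)‖ ^ 2 := by nlinarith [norm_nonneg (u + h*v)]
  _ = normSq (u + h * v) := Complex.sq_norm _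

inductive HCFGood (a : ℕ → GaussianInt) (m : ℕ) : ℕ → GaussianInt → Prop
  | top (k : ℕ) (γ : GaussianInt) (hk : k + 1 ≤ m) (hγ : a (k + 1) = γ)
      (hn : Zsqrtd.norm γ = 2) : HCFGood a m k γ
  | step (k : ℕ) (γ' γ : GaussianInt) (hg : HCFGood a m (k + 1) γ')
      (hγ : γ = a (k + 1) + star γ') (hn : Zsqrtd.norm γ = 2) : HCFGood a m k γ

lemma HCFGood.le {a : ℕ → GaussianInt} {m k : ℕ} {γ : GaussianInt}
    (h : HCFGood a m k γ) : k + 1 ≤ m := by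
  induction h with
  | top k γ hk _ _ => exact hk
  | step k γ' γ hg _ _ ih => omega

lemma HCFGood.norm2 {a : ℕ → GaussianInt} {m k : ℕ} {γ : GaussianInt}
    (h : HCFGood a m k γ) : Zsqrtd.norm γ = 2 := by
  cases h with
  | top _ _ _ _ hn => exact hn
  | step _ _ _ _ _ hn => exact hn


section MainInduction

variable (a : ℕ → GaussianInt) (m : ℕ) (zseq : ℕ → ℂ)
variable (hnear : ∀ k ≤ m, |(zseq k - (a k : ℂ)).re| ≤ 1 / 2 ∧ |(zseq k - (a k : ℂ)).im| ≤ 1 / 2)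
variable (hiter : ∀ k < m, zseq (k + 1) = (zseq k - (a k : ℂ))⁻¹)
variable (hlegal : ∀ k < m, zseq k ≠ (a k : ℂ))

lemma hcf_gnorm (u : GaussianInt) : Zsqrtd.norm u = u.re * u.re + u.im * u.im := by
  simp [Zsqrtd.norm]

lemma hcf_normSq_coe (u : GaussianInt) :
    Complex.normSq (u : ℂ) = ((Zsqrtd.norm u : ℤ) : ℝ) :=
  (GaussianInt.intCast_real_norm u).symm

lemma hcf_zlow_real (α β p q : ℝ)
    (hcase : (α = 0 ∧ β = 0) ∨ ((α = 1 ∨ α = -1) ∧ β = 0) ∨ (α = 0 ∧ (β = 1 ∨ β = -1)))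
    (hp1 : -(1/2) ≤ p) (hp2 : p ≤ 1/2) (hq1 : -(1/2) ≤ q) (hq2 : q ≤ 1/2) :
    p^2 + q^2 ≤ (1 - (α*p - β*q))^2 + (α*q + β*p)^2 := by
  rcases hcase with ⟨h1,h2⟩ | ⟨h1,h2⟩ | ⟨h1,h2⟩
  · subst h1; subst h2; nlinarith
  · subst h2; rcases h1 with h1 | h1 <;> subst h1 <;> nlinarith
  · subst h1; rcases h2 with h2 | h2 <;> subst h2 <;> nlinarith

lemma hcf_int_cases (hr hi : ℤ) (h : hr * hr + hi * hi ≤ 1) :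
    (hr = 0 ∧ hi = 0) ∨ ((hr = 1 ∨ hr = -1) ∧ hi = 0) ∨ (hr = 0 ∧ (hi = 1 ∨ hi = -1)) := by
  have h1 : -1 ≤ hr := by nlinarith [mul_self_nonneg hi, mul_self_nonneg hr]
  have h2 : hr ≤ 1 := by nlinarith [mul_self_nonneg hi, mul_self_nonneg hr]
  have h3 : -1 ≤ hi := by nlinarith [mul_self_nonneg hi, mul_self_nonneg hr]
  have h4 : hi ≤ 1 := by nlinarith [mul_self_nonneg hi, mul_self_nonneg hr]
  interval_cases hr <;> interval_cases hi <;> omega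

include hnear hiter hlegal in
lemma hcf_zlow (j : ℕ) (hj : j < m) (h : GaussianInt) (hh : Zsqrtd.norm h ≤ 1) :
    1 ≤ normSq (zseq (j + 1) - (h : ℂ)) := by
  set W : ℂ := zseq j - (a j : ℂ) with hWdef
  have hWne : W ≠ 0 := sub_ne_zero.2 (hlegal j hj)
  have hz : zseq (j + 1) = W⁻¹ := hiter j hj
  obtain ⟨hre, him⟩ := hnear j (le_of_lt hj)
  have hWre := abs_le.1 hre
  have hWim := abs_le.1 him
  have h0 : 0 < normSq W := Complex.normSq_pos.2 hWne
  have e : (W⁻¹ - (h : ℂ)) * W = 1 - (h : ℂ) * W := by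
    rw [sub_mul, inv_mul_cancel₀ hWne]
  have e2 : normSq (W⁻¹ - (h : ℂ)) * normSq W = normSq (1 - (h : ℂ) * W) := by
    rw [← Complex.normSq_mul, e]
  have hnormh : h.re * h.re + h.im * h.im ≤ 1 := by rw [← hcf_gnorm]; exact hh
  have hcases := hcf_int_cases h.re h.im hnormh
  have hcre : ((h : ℂ)).re = ((h.re : ℤ) : ℝ) := (GaussianInt.intCast_re h).symm
  have hcim : ((h : ℂ)).im = ((h.im : ℤ) : ℝ) := (GaussianInt.intCast_im h).symm
  have hcastcases : (((h:ℂ)).re = 0 ∧ ((h:ℂ)).im = 0) ∨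
      ((((h:ℂ)).re = 1 ∨ ((h:ℂ)).re = -1) ∧ ((h:ℂ)).im = 0) ∨
      (((h:ℂ)).re = 0 ∧ (((h:ℂ)).im = 1 ∨ ((h:ℂ)).im = -1)) := by
    rw [hcre, hcim]
    rcases hcases with ⟨e1,e2⟩ | ⟨e1,e2⟩ | ⟨e1,e2⟩
    · left; constructor <;> [rw [e1]; rw [e2]] <;> norm_num
    · right; left
      constructor
      · rcases e1 with e1 | e1 <;> [left; right] <;> rw [e1] <;> norm_num
      · rw [e2]; norm_num
    · right; right
      constructor
      · rw [e1]; norm_num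
      · rcases e2 with e2 | e2 <;> [left; right] <;> rw [e2] <;> norm_num
  have key : normSq W ≤ normSq (1 - (h : ℂ) * W) := by
    simp only [Complex.normSq_apply, Complex.sub_re, Complex.sub_im, Complex.mul_re,
      Complex.mul_im, Complex.one_re, Complex.one_im]
    have := hcf_zlow_real ((h:ℂ)).re ((h:ℂ)).im W.re W.im hcastcases
      hWre.1 hWre.2 hWim.1 hWim.2
    nlinarith [this]
  have hfin : 1 * normSq W ≤ normSq (W⁻¹ - (h : ℂ)) * normSq W := by
    rw [e2, one_mul]; exact key
  have := le_of_mul_le_mul_right hfin h0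
  rw [hz]; exact this

include hnear hiter hlegal in
lemma hcf_digit_norm (j : ℕ) (hj : j < m) : 2 ≤ Zsqrtd.norm (a (j + 1)) := by
  by_contra hcon
  push_neg at hcon
  have h1 : 1 ≤ normSq (zseq (j + 1) - (a (j + 1) : ℂ)) :=
    hcf_zlow a m zseq hnear hiter hlegal j hj (a (j + 1)) (by omega)
  obtain ⟨hre, him⟩ := hnear (j + 1) hj
  have h2 : normSq (zseq (j + 1) - (a (j + 1) : ℂ)) ≤ 1 / 2 := by
    rw [Complex.normSq_apply]
    nlinarith [abs_le.1 hre, abs_le.1 him]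
  linarith

include hnear hiter hlegal in
lemma hcf_df {k : ℕ} {γ : GaussianInt} (hg : HCFGood a m k γ) :
    normSq (zseq (k + 1) - (γ : ℂ)) < 1 := by
  induction hg with
  | top k γ hk hγ hn =>
    obtain ⟨hre, him⟩ := hnear (k + 1) hk
    rw [← hγ, Complex.normSq_apply]
    nlinarith [abs_le.1 hre, abs_le.1 him]
  | step k γ' γ hg hγ hn ih =>
    have hk2 : k + 2 ≤ m := hg.le
    have hk1 : k + 1 < m := by omega
    set W : ℂ := zseq (k + 1) - (a (k + 1) : ℂ) with hWdef
    have hWne : W ≠ 0 := sub_ne_zero.2 (hlegal (k + 1) hk1)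
    have hz : zseq (k + 2) = W⁻¹ := hiter (k + 1) hk1
    have hZne : zseq (k + 2) ≠ 0 := by rw [hz]; exact inv_ne_zero hWne
    have hγ'2 : normSq ((γ' : ℂ)) = 2 := by
      rw [hcf_normSq_coe, hg.norm2]; norm_num
    have hlt := hcf_inv_disk hZne hγ'2 ih
    have hZinv : (zseq (k + 2))⁻¹ = W := by rw [hz, inv_inv]
    rw [hZinv] at hlt
    have hcoe : (γ : ℂ) = (a (k + 1) : ℂ) + (starRingEnd ℂ) (γ' : ℂ) := by
      rw [hγ, GaussianInt.toComplex_add, GaussianInt.toComplex_star]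
    have heq : zseq (k + 1) - (γ : ℂ) = W - (starRingEnd ℂ) (γ' : ℂ) := by
      rw [hcoe, hWdef]; ring
    rw [heq]
    exact hlt


include hnear hiter hlegal in
lemma hcf_main (f : ℕ → GaussianInt) (hf0 : f 0 = 0) (hf1 : f 1 = 1)
    (hfrec : ∀ k : ℕ, f (k + 2) = a (k + 1) * f (k + 1) + f k) :
    ∀ k : ℕ, (k ≤ m → normSq (f k : ℂ) ≤ normSq (f (k + 1) : ℂ)) ∧
      (∀ γ : GaussianInt, HCFGood a m k γ →
        normSq (f (k + 1) : ℂ) ≤ normSq ((f k : ℂ) + (γ : ℂ) * (f (k + 1) : ℂ))) := by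
  intro k
  induction k with
  | zero =>
    constructor
    · intro _
      rw [hf0, hf1]
      simp
    · intro γ hg
      rw [hf0, hf1]
      have h2 : normSq ((γ : ℂ)) = 2 := by rw [hcf_normSq_coe, hg.norm2]; norm_num
      simp only [GaussianInt.toComplex_zero, GaussianInt.toComplex_one, zero_add, mul_one,
        map_one]
      rw [h2]; norm_num
  | succ k ih =>
    have MONO := ih.1
    have AVC := ih.2
    constructor
    · -- MONO (k+1)
      intro hk1
      have hrec := hfrec k
      have hcrec : (f (k + 2) : ℂ) = (a (k + 1) : ℂ) * (f (k + 1) : ℂ) + (f k : ℂ) := by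
        rw [hrec, GaussianInt.toComplex_add, GaussianInt.toComplex_mul]
      have hk : k < m := by omega
      have hd2 : 2 ≤ Zsqrtd.norm (a (k + 1)) := hcf_digit_norm a m zseq hnear hiter hlegal k hk
      rcases le_or_gt (Zsqrtd.norm (a (k + 1))) 3 with h3 | h4
      · have hcase : Zsqrtd.norm (a (k + 1)) = 2 ∨ Zsqrtd.norm (a (k + 1)) = 3 := by omega
        rcases hcase with h2 | h3'
        · have hgood : HCFGood a m k (a (k + 1)) := HCFGood.top k (a (k + 1)) hk1 rfl h2
          have hA := AVC (a (k + 1)) hgood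
          rw [hcrec]
          have hcomm : (f k : ℂ) + (a (k + 1) : ℂ) * (f (k + 1) : ℂ)
              = (a (k + 1) : ℂ) * (f (k + 1) : ℂ) + (f k : ℂ) := by ring
          rw [← hcomm]
          exact hA
        · exfalso
          have hg := hcf_gnorm (a (k + 1))
          rw [h3'] at hg
          exact hcf_sq_add_sq_ne_three _ _ hg.symm
      · have habs : 2 ≤ ‖(a (k + 1) : ℂ)‖ := by
          have h4' : (4 : ℝ) ≤ normSq ((a (k + 1) : ℂ)) := by
            rw [hcf_normSq_coe]
            have : (4 : ℤ) ≤ Zsqrtd.norm (a (k + 1)) := by omega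
            exact_mod_cast this
          nlinarith [norm_nonneg ((a (k + 1) : ℂ)), Complex.sq_norm ((a (k + 1) : ℂ))]
        have habsle : ‖(f k : ℂ)‖ ≤ ‖(f (k + 1) : ℂ)‖ := by
          have hM := MONO (by omega)
          nlinarith [norm_nonneg ((f k : ℂ)), norm_nonneg ((f (k + 1) : ℂ)),
            Complex.sq_norm ((f k : ℂ)), Complex.sq_norm ((f (k + 1) : ℂ))]
        have ht := hcf_tri ((a (k + 1) : ℂ)) ((f k : ℂ)) ((f (k + 1) : ℂ)) habs habsle
        rw [hcrec]
        have hcomm : (f k : ℂ) + (a (k + 1) : ℂ) * (f (k + 1) : ℂ)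
            = (a (k + 1) : ℂ) * (f (k + 1) : ℂ) + (f k : ℂ) := by ring
        rw [← hcomm]
        exact ht
    · -- AVC (k+1)
      intro γ hg
      have hk2 : k + 2 ≤ m := hg.le
      have hγ2 : Zsqrtd.norm γ = 2 := hg.norm2
      have hγ2c : normSq ((γ : ℂ)) = 2 := by rw [hcf_normSq_coe, hγ2]; norm_num
      set h : GaussianInt := a (k + 1) + star γ with hh
      have hrec := hfrec k
      have hcrec : (f (k + 2) : ℂ) = (a (k + 1) : ℂ) * (f (k + 1) : ℂ) + (f k : ℂ) := by
        rw [hrec, GaussianInt.toComplex_add, GaussianInt.toComplex_mul]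
      have hhc : (h : ℂ) = (a (k + 1) : ℂ) + (starRingEnd ℂ) (γ : ℂ) := by
        rw [hh, GaussianInt.toComplex_add, GaussianInt.toComplex_star]
      have hid := hcf_q_id (γ : ℂ) (f (k + 1) : ℂ) (f (k + 2) : ℂ) hγ2c
      have hsubst : (f (k + 2) : ℂ) + (starRingEnd ℂ) (γ : ℂ) * (f (k + 1) : ℂ)
          = (f k : ℂ) + (h : ℂ) * (f (k + 1) : ℂ) := by
        rw [hcrec, hhc]; ring
      rw [hsubst] at hid
      have main_goal : normSq ((f (k + 1) : ℂ)) ≤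
          normSq ((f k : ℂ) + (h : ℂ) * (f (k + 1) : ℂ)) →
          normSq (f (k + 2) : ℂ) ≤ normSq ((f (k + 1) : ℂ) + (γ : ℂ) * (f (k + 2) : ℂ)) := by
        intro hred
        linarith
      apply main_goal
      rcases le_or_gt (Zsqrtd.norm h) 1 with hle1 | hgt1
      · exfalso
        have dfact := hcf_df a m zseq hnear hiter hlegal hg
        have hk1 : k + 1 < m := by omega
        set W : ℂ := zseq (k + 1) - (a (k + 1) : ℂ) with hWdef
        have hWne : W ≠ 0 := sub_ne_zero.2 (hlegal (k + 1) hk1)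
        have hzz : zseq (k + 2) = W⁻¹ := hiter (k + 1) hk1
        have hZne : zseq (k + 2) ≠ 0 := by rw [hzz]; exact inv_ne_zero hWne
        have hlt := hcf_inv_disk hZne hγ2c dfact
        have hZinv : (zseq (k + 2))⁻¹ = W := by rw [hzz, inv_inv]
        rw [hZinv] at hlt
        have heq : W - (starRingEnd ℂ) (γ : ℂ) = zseq (k + 1) - (h : ℂ) := by
          rw [hWdef, hhc]; ring
        rw [heq] at hlt
        have hge := hcf_zlow a m zseq hnear hiter hlegal k (by omega) h hle1
        linarith
      · rcases le_or_gt (Zsqrtd.norm h) 3 with h3 | h4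
        · have hcase : Zsqrtd.norm h = 2 ∨ Zsqrtd.norm h = 3 := by omega
          rcases hcase with h2 | h3'
          · have hgood : HCFGood a m k h := HCFGood.step k γ h hg hh h2
            exact AVC h hgood
          · exfalso
            have hgn := hcf_gnorm h
            rw [h3'] at hgn
            exact hcf_sq_add_sq_ne_three _ _ hgn.symm
        · have habs : 2 ≤ ‖(h : ℂ)‖ := by
            have h4' : (4 : ℝ) ≤ normSq ((h : ℂ)) := by
              rw [hcf_normSq_coe]
              have : (4 : ℤ) ≤ Zsqrtd.norm h := by omega
              exact_mod_cast this
            nlinarith [norm_nonneg ((h : ℂ)), Complex.sq_norm ((h : ℂ))]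
          have habsle : ‖(f k : ℂ)‖ ≤ ‖(f (k + 1) : ℂ)‖ := by
            have hM := MONO (by omega)
            nlinarith [norm_nonneg ((f k : ℂ)), norm_nonneg ((f (k + 1) : ℂ)),
              Complex.sq_norm ((f k : ℂ)), Complex.sq_norm ((f (k + 1) : ℂ))]
          exact hcf_tri ((h : ℂ)) ((f k : ℂ)) ((f (k + 1) : ℂ)) habs habsle


include hnear hiter hlegal in
lemma hcf_chain_mono (f : ℕ → GaussianInt) (hf0 : f 0 = 0) (hf1 : f 1 = 1)
    (hfrec : ∀ k : ℕ, f (k + 2) = a (k + 1) * f (k + 1) + f k) :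
    ∀ i j : ℕ, i ≤ j → j ≤ m + 1 → Zsqrtd.norm (f i) ≤ Zsqrtd.norm (f j) := by
  intro i j hij hjm
  induction j, hij using Nat.le_induction with
  | base => exact le_refl _
  | succ j hij ih =>
    have h1 : Zsqrtd.norm (f i) ≤ Zsqrtd.norm (f j) := ih (by omega)
    have h2 : normSq (f j : ℂ) ≤ normSq (f (j + 1) : ℂ) :=
      (hcf_main a m zseq hnear hiter hlegal f hf0 hf1 hfrec j).1 (by omega)
    rw [hcf_normSq_coe, hcf_normSq_coe] at h2
    have h2' : Zsqrtd.norm (f j) ≤ Zsqrtd.norm (f (j + 1)) := by exact_mod_cast h2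
    omega

end MainInduction

lemma hcf_norm_dvd {u v : GaussianInt} (h : u ∣ v) : Zsqrtd.norm u ∣ Zsqrtd.norm v := by
  obtain ⟨t, rfl⟩ := h
  exact ⟨Zsqrtd.norm t, Zsqrtd.norm_mul u t⟩

/-- Let `w` be an odd positive integer that is not a perfect square, and let `x, y` be
integers with `0 ≤ x, y < w/2` and `x² + y² ≡ −1 (mod w)`.  Let `z = (x+yi)/w` have
(finite) Hurwitz continued fraction expansion `[a₀; a₁, …, a_m]` with associated Q-pair
`(P, Q)`.  Then there exists exactly one index `n` with `0 ≤ n < m` such that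
`|Qₙ| ≤ √w < |Qₙ₊₁|`. -/
theorem unique_index_with_denominator_straddling_sqrt
    (w : ℕ) (hw : 0 < w) (hodd : Odd w) (hnsq : ¬ IsSquare w)
    (x y : ℤ) (hx0 : 0 ≤ x) (hy0 : 0 ≤ y)
    (hx : 2 * x < (w : ℤ)) (hy : 2 * y < (w : ℤ))
    (hcong : (w : ℤ) ∣ x ^ 2 + y ^ 2 + 1)
    (z : ℂ) (hz : z = ((x : ℂ) + (y : ℂ) * Complex.I) / (w : ℂ))
    (zseq : ℕ → ℂ) (a : ℕ → GaussianInt) (m : ℕ)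
    (hz0 : zseq 0 = z)
    (hnear : ∀ k ≤ m, |(zseq k - (a k : ℂ)).re| ≤ 1 / 2 ∧ |(zseq k - (a k : ℂ)).im| ≤ 1 / 2)
    (hiter : ∀ k < m, zseq (k + 1) = (zseq k - (a k : ℂ))⁻¹)
    (hlegal : ∀ k < m, zseq k ≠ (a k : ℂ))
    (hterm : zseq m = (a m : ℂ))
    (P Q : ℤ → GaussianInt)
    (hP1 : P (-1) = 1) (hP0 : P 0 = a 0)
    (hPrec : ∀ k : ℕ, P ((k : ℤ) + 1) = a (k + 1) * P k + P ((k : ℤ) - 1))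
    (hQ1 : Q (-1) = 0) (hQ0 : Q 0 = 1)
    (hQrec : ∀ k : ℕ, Q ((k : ℤ) + 1) = a (k + 1) * Q k + Q ((k : ℤ) - 1)) :
    ∃! n : ℕ, n < m ∧ ‖(Q n : ℂ)‖ ≤ Real.sqrt w ∧
      Real.sqrt w < ‖(Q (n + 1) : ℂ)‖ := by
  classical
  -- re-indexed sequences
  set f : ℕ → GaussianInt := fun k => Q ((k : ℤ) - 1) with hfdef
  set g : ℕ → GaussianInt := fun k => P ((k : ℤ) - 1) with hgdef
  have hf0 : f 0 = 0 := by simp [hfdef, hQ1]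
  have hf1 : f 1 = 1 := by simp [hfdef, hQ0]
  have hg0 : g 0 = 1 := by simp [hgdef, hP1]
  have hg1 : g 1 = a 0 := by simp [hgdef, hP0]
  have hfrec : ∀ k : ℕ, f (k + 2) = a (k + 1) * f (k + 1) + f k := by
    intro k
    have h1 : ((k + 2 : ℕ) : ℤ) - 1 = (k : ℤ) + 1 := by push_cast; ring
    have h2 : ((k + 1 : ℕ) : ℤ) - 1 = (k : ℤ) := by push_cast; ring
    simp only [hfdef, h1, h2]
    have := hQrec k
    rw [this]
  have hgrec : ∀ k : ℕ, g (k + 2) = a (k + 1) * g (k + 1) + g k := by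
    intro k
    have h1 : ((k + 2 : ℕ) : ℤ) - 1 = (k : ℤ) + 1 := by push_cast; ring
    have h2 : ((k + 1 : ℕ) : ℤ) - 1 = (k : ℤ) := by push_cast; ring
    simp only [hgdef, h1, h2]
    have := hPrec k
    rw [this]
  have hfQ : ∀ n : ℕ, f (n + 1) = Q (n : ℤ) := by
    intro n
    have h2 : ((n + 1 : ℕ) : ℤ) - 1 = (n : ℤ) := by push_cast; ring
    simp only [hfdef, h2]
  have hfQ' : ∀ n : ℕ, f (n + 2) = Q ((n : ℤ) + 1) := by
    intro n
    have h2 : ((n + 2 : ℕ) : ℤ) - 1 = (n : ℤ) + 1 := by push_cast; ring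
    simp only [hfdef, h2]
  -- basic facts about w
  have hw2 : 2 ≤ w := by
    by_contra hcon
    push_neg at hcon
    have hw1 : w = 1 := by omega
    exact hnsq (hw1 ▸ IsSquare.one)
  have hwC : (w : ℂ) ≠ 0 := by
    simp only [ne_eq, Nat.cast_eq_zero]
    omega
  have hwz : (w : ℂ) * z = (x : ℂ) + (y : ℂ) * Complex.I := by
    rw [hz]
    field_simp
  -- the chain identity for D j = f j * z - g j
  have chain : ∀ j : ℕ, j < m →
      ((f (j + 1) : ℂ) * z - (g (j + 1) : ℂ)) * zseq (j + 1)
        = -((f j : ℂ) * z - (g j : ℂ)) := by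
    intro j
    induction j with
    | zero =>
      intro h0
      have hzz : zseq 1 = (z - (a 0 : ℂ))⁻¹ := by
        rw [hiter 0 h0, hz0]
      have hne : z - (a 0 : ℂ) ≠ 0 := by
        rw [← hz0]; exact sub_ne_zero.2 (hlegal 0 h0)
      rw [hf1, hg1, hf0, hg0, hzz]
      simp only [GaussianInt.toComplex_one, GaussianInt.toComplex_zero, one_mul, zero_mul]
      rw [mul_inv_cancel₀ hne]
      ring
    | succ j ihj =>
      intro hj1
      have hj : j < m := by omega
      have IH := ihj hj
      have hrecf := hfrec j
      have hrecg := hgrec j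
      have hDrec : (f (j + 2) : ℂ) * z - (g (j + 2) : ℂ)
          = (a (j + 1) : ℂ) * ((f (j + 1) : ℂ) * z - (g (j + 1) : ℂ))
            + ((f j : ℂ) * z - (g j : ℂ)) := by
        rw [hrecf, hrecg, GaussianInt.toComplex_add, GaussianInt.toComplex_mul,
          GaussianInt.toComplex_add, GaussianInt.toComplex_mul]
        ring
      have hzz : zseq (j + 2) = (zseq (j + 1) - (a (j + 1) : ℂ))⁻¹ := hiter (j + 1) hj1
      have hne : zseq (j + 1) - (a (j + 1) : ℂ) ≠ 0 := sub_ne_zero.2 (hlegal (j + 1) hj1)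
      have hprod : (zseq (j + 1) - (a (j + 1) : ℂ)) * zseq (j + 2) = 1 := by
        rw [hzz, mul_inv_cancel₀ hne]
      -- substitute IH into hDrec
      have hD0 : (f j : ℂ) * z - (g j : ℂ)
          = -(((f (j + 1) : ℂ) * z - (g (j + 1) : ℂ)) * zseq (j + 1)) := by
        rw [IH]; ring
      have hsub : (f (j + 2) : ℂ) * z - (g (j + 2) : ℂ)
          = ((f (j + 1) : ℂ) * z - (g (j + 1) : ℂ)) * ((a (j + 1) : ℂ) - zseq (j + 1)) := by
        rw [hDrec, hD0]; ring
      rw [hsub]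
      calc ((f (j + 1) : ℂ) * z - (g (j + 1) : ℂ)) * ((a (j + 1) : ℂ) - zseq (j + 1))
          * zseq (j + 2)
          = -(((f (j + 1) : ℂ) * z - (g (j + 1) : ℂ))
              * ((zseq (j + 1) - (a (j + 1) : ℂ)) * zseq (j + 2))) := by ring
        _ = -((f (j + 1) : ℂ) * z - (g (j + 1) : ℂ)) := by rw [hprod]; ring
  -- D (m+1) = 0
  have Dtop : (f (m + 1) : ℂ) * z - (g (m + 1) : ℂ) = 0 := by
    cases m with
    | zero =>
      rw [hf1, hg1]
      simp only [GaussianInt.toComplex_one, one_mul]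
      have : z = (a 0 : ℂ) := by rw [← hz0, hterm]
      rw [this]; ring
    | succ mm =>
      have hc := chain mm (by omega)
      have hrecf := hfrec mm
      have hrecg := hgrec mm
      have hDrec : (f (mm + 2) : ℂ) * z - (g (mm + 2) : ℂ)
          = (a (mm + 1) : ℂ) * ((f (mm + 1) : ℂ) * z - (g (mm + 1) : ℂ))
            + ((f mm : ℂ) * z - (g mm : ℂ)) := by
        rw [hrecf, hrecg, GaussianInt.toComplex_add, GaussianInt.toComplex_mul,
          GaussianInt.toComplex_add, GaussianInt.toComplex_mul]
        ring
      have hD0 : (f mm : ℂ) * z - (g mm : ℂ)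
          = -(((f (mm + 1) : ℂ) * z - (g (mm + 1) : ℂ)) * zseq (mm + 1)) := by
        rw [hc]; ring
      rw [hDrec, hD0, hterm]
      ring
  -- the Gaussian integer x + yi
  set ξ : GaussianInt := ⟨x, y⟩ with hξdef
  have hξc : (ξ : ℂ) = (x : ℂ) + (y : ℂ) * Complex.I := GaussianInt.toComplex_def' x y
  have hwgc : (((w : GaussianInt)) : ℂ) = (w : ℂ) := by
    exact_mod_cast map_natCast GaussianInt.toComplex w
  -- the fundamental relation ξ * Q_m = w * P_m
  have RM : ξ * f (m + 1) = (w : GaussianInt) * g (m + 1) := by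
    have : ((ξ * f (m + 1) : GaussianInt) : ℂ) = (((w : GaussianInt) * g (m + 1) : GaussianInt) : ℂ) := by
      rw [GaussianInt.toComplex_mul, GaussianInt.toComplex_mul, hξc, hwgc, ← hwz]
      have hfg : (f (m + 1) : ℂ) * z = (g (m + 1) : ℂ) := sub_eq_zero.1 Dtop
      rw [← hfg]; ring
    exact GaussianInt.toComplex_inj.1 this
  -- coprimality of w and ξ
  obtain ⟨c, hc⟩ := hcong
  have hnormξ : Zsqrtd.norm ξ = x * x + y * y := by
    rw [hcf_gnorm]
  have hstarξ : ξ * star ξ = ((x * x + y * y : ℤ) : GaussianInt) := by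
    rw [← hnormξ]
    exact (Zsqrtd.norm_eq_mul_conj ξ).symm
  have hcop1 : IsCoprime ((w : GaussianInt)) ξ := by
    refine ⟨((c : ℤ) : GaussianInt), -(star ξ), ?_⟩
    have hZ : ((c : ℤ) : GaussianInt) * ((w : ℕ) : GaussianInt)
        = (((w : ℤ) * c : ℤ) : GaussianInt) := by
      push_cast
      ring
    rw [hZ, ← hc]
    have : -star ξ * ξ = -((x * x + y * y : ℤ) : GaussianInt) := by
      rw [← hstarξ]; ring
    rw [this]
    push_cast
    ring
  -- coprimality of f (m+1) and g (m+1) via the determinant identity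
  have det : ∀ k : ℕ, f (k + 1) * g k - f k * g (k + 1) = (-1) ^ k := by
    intro k
    induction k with
    | zero => rw [hf0, hf1, hg0, hg1]; ring
    | succ k ih =>
      rw [hfrec k, hgrec k, pow_succ]
      linear_combination (-1 : GaussianInt) * ih
  have hcop2 : IsCoprime (f (m + 1)) (g (m + 1)) := by
    refine ⟨(-1) ^ m * g m, -((-1) ^ m * f m), ?_⟩
    have hdm := det m
    calc (-1) ^ m * g m * f (m + 1) + -((-1) ^ m * f m) * g (m + 1)
        = (-1) ^ m * (f (m + 1) * g m - f m * g (m + 1)) := by ring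
      _ = (-1) ^ m * (-1) ^ m := by rw [hdm]
      _ = 1 := by rw [← pow_add]; simp [pow_mul]
  -- mutual divisibility between w and f (m+1)
  have hdvd1 : (w : GaussianInt) ∣ f (m + 1) := by
    have h1 : (w : GaussianInt) ∣ ξ * f (m + 1) := by
      rw [RM]; exact dvd_mul_right _ _
    exact hcop1.dvd_of_dvd_mul_left h1
  have hdvd2 : f (m + 1) ∣ (w : GaussianInt) := by
    have h1 : f (m + 1) ∣ (w : GaussianInt) * g (m + 1) := by
      rw [← RM]; exact dvd_mul_left _ _
    exact hcop2.dvd_of_dvd_mul_right h1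
  -- hence norm (f (m+1)) = w^2
  have hnormw : Zsqrtd.norm ((w : ℕ) : GaussianInt) = (w : ℤ) * (w : ℤ) := by
    have : ((w : ℕ) : GaussianInt) = (((w : ℕ) : ℤ) : GaussianInt) := by push_cast; ring
    rw [this, Zsqrtd.norm_intCast]
  have normQm : Zsqrtd.norm (f (m + 1)) = (w : ℤ) * (w : ℤ) := by
    have h1 := hcf_norm_dvd hdvd1
    have h2 := hcf_norm_dvd hdvd2
    rw [hnormw] at h1 h2
    exact Int.dvd_antisymm (Zsqrtd.norm_nonneg (by norm_num) _) (by positivity) h2 h1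
  -- m ≥ 1
  have hm1 : 1 ≤ m := by
    by_contra hcon
    push_neg at hcon
    have hm0 : m = 0 := by omega
    rw [hm0, hf1, Zsqrtd.norm_one] at normQm
    have : (2 : ℤ) ≤ (w : ℤ) := by exact_mod_cast hw2
    nlinarith
  -- integer monotone chain
  have nmono : ∀ i j : ℕ, i ≤ j → j ≤ m + 1 → Zsqrtd.norm (f i) ≤ Zsqrtd.norm (f j) :=
    hcf_chain_mono a m zseq hnear hiter hlegal f hf0 hf1 hfrec
  have hnorm1 : Zsqrtd.norm (f 1) = 1 := by rw [hf1, Zsqrtd.norm_one]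
  -- the predicate and the found index
  set Pd : ℕ → Prop := fun n => Zsqrtd.norm (f (n + 1)) ≤ (w : ℤ) with hPd
  have hPd0 : Pd 0 := by
    rw [hPd]
    simp only [hnorm1]
    exact_mod_cast hw
  set N : ℕ := Nat.findGreatest Pd (m - 1) with hN
  have hNP : Pd N := by
    rw [hN]
    exact Nat.findGreatest_spec (Nat.zero_le _) hPd0
  have hNle : N ≤ m - 1 := by
    rw [hN]
    exact Nat.findGreatest_le (m - 1)
  have hNgr : ∀ k : ℕ, N < k → k ≤ m - 1 → ¬ Pd k := by
    intro k h1 h2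
    rw [hN] at h1
    exact Nat.findGreatest_is_greatest h1 h2
  have hNm : N < m := by omega
  have hupper : (w : ℤ) < Zsqrtd.norm (f (N + 2)) := by
    rcases Nat.lt_or_ge (N + 1) m with hlt | hge
    · have hng : ¬ Pd (N + 1) := hNgr (N + 1) (by omega) (by omega)
      have hng2 : ¬ (Zsqrtd.norm (f (N + 2)) ≤ (w : ℤ)) := by
        have e : N + 2 = (N + 1) + 1 := by omega
        rw [e]
        exact hng
      omega
    · have hNe : N + 1 = m := by omega
      have : Zsqrtd.norm (f (m + 1)) = (w : ℤ) * (w : ℤ) := normQm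
      rw [show N + 2 = m + 1 by omega, this]
      have hw2' : (2 : ℤ) ≤ (w : ℤ) := by exact_mod_cast hw2
      nlinarith
  -- translation between integer norms and complex absolute values
  have habs_of_le : ∀ (u : GaussianInt), Zsqrtd.norm u ≤ (w : ℤ) →
      ‖(u : ℂ)‖ ≤ Real.sqrt w := by
    intro u hu
    rw [Complex.norm_def, hcf_normSq_coe]
    apply Real.sqrt_le_sqrt
    exact_mod_cast hu
  have hlt_of_abs : ∀ (u : GaussianInt), (w : ℤ) < Zsqrtd.norm u →
      Real.sqrt w < ‖(u : ℂ)‖ := by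
    intro u hu
    rw [Complex.norm_def, hcf_normSq_coe]
    apply Real.sqrt_lt_sqrt (by positivity)
    exact_mod_cast hu
  have hle_of_abs : ∀ (u : GaussianInt), ‖(u : ℂ)‖ ≤ Real.sqrt w →
      Zsqrtd.norm u ≤ (w : ℤ) := by
    intro u hu
    have h1 : ‖(u : ℂ)‖ ^ 2 ≤ Real.sqrt w ^ 2 := by
      have := norm_nonneg (u : ℂ)
      nlinarith [Real.sqrt_nonneg (w : ℝ)]
    rw [Complex.sq_norm, hcf_normSq_coe, Real.sq_sqrt (by positivity : (0:ℝ) ≤ (w:ℝ))] at h1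
    exact_mod_cast h1
  have habs_of_lt : ∀ (u : GaussianInt), Real.sqrt w < ‖(u : ℂ)‖ →
      (w : ℤ) < Zsqrtd.norm u := by
    intro u hu
    have h1 : Real.sqrt w ^ 2 < ‖(u : ℂ)‖ ^ 2 := by
      have := Real.sqrt_nonneg (w : ℝ)
      nlinarith [norm_nonneg (u : ℂ)]
    rw [Complex.sq_norm, hcf_normSq_coe, Real.sq_sqrt (by positivity : (0:ℝ) ≤ (w:ℝ))] at h1
    exact_mod_cast h1
  -- conclusion
  refine ⟨N, ⟨hNm, ?_, ?_⟩, ?_⟩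
  · rw [← hfQ N]
    exact habs_of_le _ hNP
  · rw [← hfQ' N]
    exact hlt_of_abs _ hupper
  · rintro n' ⟨hn'm, h1, h2⟩
    rw [← hfQ n'] at h1
    rw [← hfQ' n'] at h2
    have hn'P : Zsqrtd.norm (f (n' + 1)) ≤ (w : ℤ) := hle_of_abs _ h1
    have hn'U : (w : ℤ) < Zsqrtd.norm (f (n' + 2)) := habs_of_lt _ h2
    by_contra hne
    rcases Nat.lt_or_ge n' N with hlt | hge
    · -- n' < N : then f (n'+2) ≤ f (N+1) ≤ w, contradiction
      have hchain : Zsqrtd.norm (f (n' + 2)) ≤ Zsqrtd.norm (f (N + 1)) :=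
        nmono (n' + 2) (N + 1) (by omega) (by omega)
      rw [hPd] at hNP
      omega
    · have hlt : N < n' := by omega
      have hchain : Zsqrtd.norm (f (N + 2)) ≤ Zsqrtd.norm (f (n' + 1)) :=
        nmono (N + 2) (n' + 1) (by omega) (by omega)
      omega
end

section
/- (Hurwitz, 1887) Let z ∈ ℂ have Hurwitz continued fraction expansion [a₀; a₁, …, a_m, …] with associated Q-pair (P_n, Q_n). Then the absolute values of the denominators are strictly increasing: 1 = |Q₀| < |Q₁| < |Q₂| < ⋯ < |Q_m| for all legal m. -/
open Complex

private lemma sq_int_cases (t : ℤ) : t^2 = 0 ∨ t^2 = 1 ∨ 4 ≤ t^2 := by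
  have h : t ≤ -2 ∨ t = -1 ∨ t = 0 ∨ t = 1 ∨ 2 ≤ t := by omega
  rcases h with h|h|h|h|h
  · right; right; nlinarith
  · subst h; norm_num
  · subst h; norm_num
  · subst h; norm_num
  · right; right; nlinarith

private lemma key_identity (p q γ : ℂ) (h : normSq γ = 2) :
    normSq (p + γ * q) - normSq q = normSq (q + (starRingEnd ℂ) γ * p) - normSq p := by
  simp only [normSq_apply, add_re, add_im, mul_re, mul_im, conj_re, conj_im] at *
  linear_combination (q.re*q.re + q.im*q.im - p.re*p.re - p.im*p.im) * h

private lemma inv_duality (w γ : ℂ) (hw : w ≠ 0) (hγ : normSq γ = 2)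
    (h : normSq (w⁻¹ - γ) < 1) : normSq (w - (starRingEnd ℂ) γ) < 1 := by
  have hw' : 0 < normSq w := normSq_pos.mpr hw
  have e : w⁻¹ - γ = (1 - γ * w) * w⁻¹ := by field_simp
  rw [e, normSq_mul, normSq_inv, ← div_eq_mul_inv, div_lt_one hw'] at h
  have hid := key_identity 1 (-w) γ hγ
  have e1 : (1 : ℂ) + γ * (-w) = 1 - γ * w := by ring
  have e2 : -w + (starRingEnd ℂ) γ * 1 = -(w - (starRingEnd ℂ) γ) := by ring
  rw [e1, e2, normSq_neg, normSq_neg, normSq_one] at hid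
  linarith

private lemma excluded_small (w : ℂ) (hw : w ≠ 0)
    (hre : |w.re| ≤ 1/2) (him : |w.im| ≤ 1/2) (p₁ p₂ : ℤ) (hp : p₁^2 + p₂^2 ≤ 1) :
    ¬ normSq (w⁻¹ - ((p₁:ℂ) + (p₂:ℂ) * I)) < 1 := by
  intro h
  have hw' : 0 < normSq w := normSq_pos.mpr hw
  have e : w⁻¹ - ((p₁:ℂ) + (p₂:ℂ) * I) = (1 - ((p₁:ℂ) + (p₂:ℂ) * I) * w) * w⁻¹ := by
    field_simp
  rw [e, normSq_mul, normSq_inv, ← div_eq_mul_inv, div_lt_one hw'] at h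
  have hre' := abs_le.mp hre
  have him' := abs_le.mp him
  have hcases : (p₁ = 0 ∧ p₂ = 0) ∨ (p₁ = 1 ∧ p₂ = 0) ∨ (p₁ = -1 ∧ p₂ = 0) ∨
      (p₁ = 0 ∧ p₂ = 1) ∨ (p₁ = 0 ∧ p₂ = -1) := by
    have h1 : -1 ≤ p₁ ∧ p₁ ≤ 1 := by constructor <;> nlinarith
    have h2 : -1 ≤ p₂ ∧ p₂ ≤ 1 := by constructor <;> nlinarith
    obtain ⟨h1a, h1b⟩ := h1; obtain ⟨h2a, h2b⟩ := h2
    interval_cases p₁ <;> interval_cases p₂ <;> simp_all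
  have hnsw : normSq w = w.re * w.re + w.im * w.im := normSq_apply w
  rcases hcases with ⟨e1,e2⟩|⟨e1,e2⟩|⟨e1,e2⟩|⟨e1,e2⟩|⟨e1,e2⟩ <;> subst e1 <;> subst e2 <;>
    simp only [Int.cast_zero, Int.cast_one, Int.cast_neg, zero_mul, one_mul, zero_add,
      add_zero, mul_zero, sub_zero, neg_mul, normSq_apply, sub_re, sub_im, one_re, one_im,
      mul_re, mul_im, add_re, add_im, I_re, I_im, ofReal_re, ofReal_im, neg_re, neg_im] at h <;>
    nlinarith [h]

private lemma big_case (γ q q' : ℂ) (hγ : 4 ≤ normSq γ) (h : normSq q' < normSq q) :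
    normSq q < normSq (γ * q + q') := by
  have h1 : ‖q'‖ < ‖q‖ := by
    rw [Complex.norm_def, Complex.norm_def]
    exact Real.sqrt_lt_sqrt (normSq_nonneg _) h
  have h2 : 2 ≤ ‖γ‖ := by
    have hs := Complex.sq_norm γ
    nlinarith [norm_nonneg γ]
  have h3 : ‖γ * q‖ ≤ ‖γ * q + q'‖ + ‖q'‖ := by
    have h4 := norm_add_le (γ * q + q') (-q')
    simpa using h4
  rw [norm_mul] at h3
  have habs : ‖q‖ < ‖γ * q + q'‖ := by
    nlinarith [norm_nonneg q]
  rw [← Complex.sq_norm, ← Complex.sq_norm]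
  nlinarith [norm_nonneg q]

private lemma normSq_int_pair (x y : ℤ) : normSq ((x:ℂ) + (y:ℂ)*I) = ((x^2 + y^2 : ℤ) : ℝ) := by
  have e : ((x:ℂ) + (y:ℂ)*I) = (((x:ℝ)):ℂ) + (((y:ℝ)):ℂ)*I := by push_cast; ring
  rw [e, Complex.normSq_add_mul_I]; push_cast; ring

set_option maxHeartbeats 1000000 in
/-- (Hurwitz, 1887)  Let `z ∈ ℂ` have Hurwitz continued fraction expansion with partial
quotients `a` and associated Q-pair `(P, Q)`.  Then the absolute values of the denominators
are strictly increasing: `1 = |Q₀| < |Q₁| < ⋯ < |Qₙ|` for every legal index `n`. -/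
theorem hurwitz_denominators_strictly_increasing
    (z : ℂ) (zseq : ℕ → ℂ) (a : ℕ → GaussianInt)
    (P Q : ℤ → GaussianInt)
    (hP1 : P (-1) = 1) (hP0 : P 0 = a 0)
    (hPrec : ∀ k : ℕ, P ((k : ℤ) + 1) = a (k + 1) * P k + P ((k : ℤ) - 1))
    (hQ1 : Q (-1) = 0) (hQ0 : Q 0 = 1)
    (hQrec : ∀ k : ℕ, Q ((k : ℤ) + 1) = a (k + 1) * Q k + Q ((k : ℤ) - 1))
    (n : ℕ)
    (hz0 : zseq 0 = z)
    (hnear : ∀ k ≤ n, |(zseq k - (a k : ℂ)).re| ≤ 1 / 2 ∧ |(zseq k - (a k : ℂ)).im| ≤ 1 / 2)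
    (hiter : ∀ k < n, zseq (k + 1) = (zseq k - (a k : ℂ))⁻¹)
    (hlegal : ∀ k < n, zseq k ≠ (a k : ℂ)) :
    ‖(Q 0 : ℂ)‖ = 1 ∧
      ∀ k < n, ‖(Q k : ℂ)‖ < ‖(Q (k + 1) : ℂ)‖ := by
  have hQ0c : ((Q 0 : GaussianInt) : ℂ) = 1 := by rw [hQ0]; exact GaussianInt.toComplex_one
  have hboxNSq : ∀ m : ℕ, m ≤ n → normSq (zseq m - (a m : ℂ)) ≤ 1/2 := by
    intro m hm
    obtain ⟨h1, h2⟩ := hnear m hm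
    obtain ⟨h1a, h1b⟩ := abs_le.mp h1
    obtain ⟨h2a, h2b⟩ := abs_le.mp h2
    rw [normSq_apply]
    nlinarith
  have main : ∀ m : ℕ, 1 ≤ m → m ≤ n →
      normSq ((Q ((m:ℤ) - 1) : ℂ)) < normSq ((Q (m:ℤ) : ℂ)) ∧
      (∀ u v : ℤ, u^2 = 1 → v^2 = 1 →
        normSq (zseq m - (a m : ℂ) - ((u:ℂ) - (v:ℂ) * I)) < 1 →
        normSq ((Q ((m:ℤ) - 1) : ℂ)) <
          normSq ((Q (m:ℤ) : ℂ) + ((u:ℂ) - (v:ℂ) * I) * (Q ((m:ℤ) - 1) : ℂ))) := by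
    intro m hm
    induction m, hm using Nat.le_induction with
    | base =>
      intro h1n
      have h0n : 0 < n := h1n
      have hw0 : zseq 0 - (a 0 : ℂ) ≠ 0 := sub_ne_zero.mpr (hlegal 0 h0n)
      have hz1 : zseq 1 = (zseq 0 - (a 0 : ℂ))⁻¹ := hiter 0 h0n
      have hb0 := hnear 0 (le_of_lt h0n)
      have hb1 : normSq (zseq 1 - (a 1 : ℂ)) < 1 :=
        lt_of_le_of_lt (hboxNSq 1 h1n) (by norm_num)
      have hq1 : Q (1:ℤ) = a 1 := by
        have h := hQrec 0
        norm_num at h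
        rw [hQ0, hQ1, mul_one, add_zero] at h
        exact h
      have haC : (a 1 : ℂ) = (((a 1).re : ℤ):ℂ) + (((a 1).im : ℤ):ℂ) * I :=
        GaussianInt.toComplex_def _
      simp only [Nat.cast_one, show (1:ℤ) - 1 = 0 from by norm_num]
      rw [hQ0c, hq1, normSq_one]
      constructor
      · -- 1 < normSq (a 1)
        by_contra hcon
        push_neg at hcon
        have hle : (a 1).re^2 + (a 1).im^2 ≤ 1 := by
          have := hcon
          rw [haC, normSq_int_pair] at this
          exact_mod_cast this
        apply excluded_small _ hw0 hb0.1 hb0.2 (a 1).re (a 1).im hle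
        rw [← hz1, ← haC]
        exact hb1
      · intro u v hu hv htrig
        rw [mul_one]
        set p₁ : ℤ := (a 1).re + u with hp1d
        set p₂ : ℤ := (a 1).im - v with hp2d
        have hγeq : (a 1 : ℂ) + ((u:ℂ) - (v:ℂ) * I) = ((p₁:ℂ) + (p₂:ℂ) * I) := by
          rw [haC, hp1d, hp2d]; push_cast; ring
        have htrig' : normSq (zseq 1 - ((p₁:ℂ) + (p₂:ℂ) * I)) < 1 := by
          rw [← hγeq]
          have e : zseq 1 - ((a 1 : ℂ) + ((u:ℂ) - (v:ℂ) * I))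
              = zseq 1 - (a 1 : ℂ) - ((u:ℂ) - (v:ℂ) * I) := by ring
          rw [e]; exact htrig
        rcases le_or_gt (p₁^2 + p₂^2) 1 with hsmall | hbig2
        · exfalso
          rw [hz1] at htrig'
          exact excluded_small _ hw0 hb0.1 hb0.2 p₁ p₂ hsmall htrig'
        · rw [hγeq, normSq_int_pair]
          exact_mod_cast hbig2
    | succ k hk ih =>
      intro hk1n
      have hkn : k ≤ n := le_trans (Nat.le_succ k) hk1n
      have hkltn : k < n := hk1n
      obtain ⟨iha, ihb⟩ := ih hkn
      have hw0 : zseq k - (a k : ℂ) ≠ 0 := sub_ne_zero.mpr (hlegal k hkltn)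
      have hz1 : zseq (k+1) = (zseq k - (a k : ℂ))⁻¹ := hiter k hkltn
      have hboxk := hnear k hkn
      have hbox1 : normSq (zseq (k+1) - (a (k+1) : ℂ)) < 1 :=
        lt_of_le_of_lt (hboxNSq (k+1) hk1n) (by norm_num)
      set r : ℤ := (a (k+1)).re with hrd
      set s : ℤ := (a (k+1)).im with hsd
      have haC : (a (k+1) : ℂ) = ((r:ℂ) + (s:ℂ) * I) := GaussianInt.toComplex_def _
      have hrec : (Q ((k:ℤ)+1) : ℂ) = (a (k+1) : ℂ) * (Q (k:ℤ) : ℂ) + (Q ((k:ℤ)-1) : ℂ) := by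
        rw [hQrec k, GaussianInt.toComplex_add, GaussianInt.toComplex_mul]
      have hage2 : 2 ≤ r^2 + s^2 := by
        by_contra hcon
        push_neg at hcon
        have h1 : r^2 + s^2 ≤ 1 := by omega
        apply excluded_small _ hw0 hboxk.1 hboxk.2 r s h1
        rw [← hz1, ← haC]
        exact hbox1
      have hidx1 : ((k+1:ℕ):ℤ) = (k:ℤ) + 1 := by push_cast; ring
      have hidx2 : ((k+1:ℕ):ℤ) - 1 = (k:ℤ) := by push_cast; ring
      rw [hidx1]
      have hidx3 : ((k:ℤ) + 1) - 1 = (k:ℤ) := by ring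
      rw [hidx3]
      constructor
      · -- part (a) : normSq (Q k) < normSq (Q (k+1))
        have hbigpath : 4 ≤ r^2 + s^2 → normSq ((Q (k:ℤ) : ℂ)) < normSq ((Q ((k:ℤ)+1) : ℂ)) := by
          intro h4
          rw [hrec]
          apply big_case _ _ _ _ iha
          rw [haC, normSq_int_pair]
          exact_mod_cast h4
        have hsmallpath : r^2 = 1 → s^2 = 1 →
            normSq ((Q (k:ℤ) : ℂ)) < normSq ((Q ((k:ℤ)+1) : ℂ)) := by
          intro hr1 hs1
          have hsum : r^2 + s^2 = 2 := by rw [hr1, hs1]; norm_num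
          have hnsq : normSq (a (k+1) : ℂ) = 2 := by
            rw [haC, normSq_int_pair]; exact_mod_cast hsum
          have htr : normSq ((zseq k - (a k : ℂ)) - (starRingEnd ℂ) (a (k+1) : ℂ)) < 1 := by
            apply inv_duality _ _ hw0 hnsq
            rw [← hz1]; exact hbox1
          have hconj : (starRingEnd ℂ) (a (k+1) : ℂ) = (r:ℂ) - (s:ℂ) * I := by
            rw [haC]
            simp only [map_add, map_mul, Complex.conj_I, map_intCast (starRingEnd ℂ)]
            ring
          rw [hconj] at htr
          have hIH := ihb r s hr1 hs1 htr
          have hid := key_identity ((Q ((k:ℤ)-1) : ℂ)) ((Q (k:ℤ) : ℂ)) ((a (k+1) : ℂ)) hnsq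
          rw [hconj] at hid
          rw [hrec]
          have hcomm : normSq ((a (k+1) : ℂ) * (Q (k:ℤ) : ℂ) + (Q ((k:ℤ)-1) : ℂ))
              = normSq ((Q ((k:ℤ)-1) : ℂ) + (a (k+1) : ℂ) * (Q (k:ℤ) : ℂ)) := by
            rw [add_comm]
          rw [hcomm]
          linarith
        rcases sq_int_cases r with h|h|h <;> rcases sq_int_cases s with h'|h'|h' <;>
          first
            | (exact absurd hage2 (by omega))
            | (exact hsmallpath h h')
            | (exact hbigpath (by omega))
      · -- part (b)
        intro u v hu hv htrig
        set p₁ : ℤ := r + u with hp1d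
        set p₂ : ℤ := s - v with hp2d
        have hγeq : (a (k+1) : ℂ) + ((u:ℂ) - (v:ℂ) * I) = ((p₁:ℂ) + (p₂:ℂ) * I) := by
          rw [haC, hp1d, hp2d]; push_cast; ring
        have htrig' : normSq ((zseq k - (a k : ℂ))⁻¹ - ((p₁:ℂ) + (p₂:ℂ) * I)) < 1 := by
          rw [← hz1, ← hγeq]
          have e : zseq (k+1) - ((a (k+1) : ℂ) + ((u:ℂ) - (v:ℂ) * I))
              = zseq (k+1) - (a (k+1) : ℂ) - ((u:ℂ) - (v:ℂ) * I) := by ring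
          rw [e]; exact htrig
        have hQQ : (Q ((k:ℤ)+1) : ℂ) + ((u:ℂ) - (v:ℂ) * I) * (Q (k:ℤ) : ℂ)
            = ((p₁:ℂ) + (p₂:ℂ) * I) * (Q (k:ℤ) : ℂ) + (Q ((k:ℤ)-1) : ℂ) := by
          rw [hrec, ← hγeq]; ring
        rw [hQQ]
        have hbigpath : 4 ≤ p₁^2 + p₂^2 →
            normSq ((Q (k:ℤ) : ℂ)) <
              normSq (((p₁:ℂ) + (p₂:ℂ) * I) * (Q (k:ℤ) : ℂ) + (Q ((k:ℤ)-1) : ℂ)) := by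
          intro h4
          apply big_case _ _ _ _ iha
          rw [normSq_int_pair]
          exact_mod_cast h4
        have hsmallpath : p₁^2 = 1 → p₂^2 = 1 →
            normSq ((Q (k:ℤ) : ℂ)) <
              normSq (((p₁:ℂ) + (p₂:ℂ) * I) * (Q (k:ℤ) : ℂ) + (Q ((k:ℤ)-1) : ℂ)) := by
          intro hr1 hs1
          have hsum : p₁^2 + p₂^2 = 2 := by rw [hr1, hs1]; norm_num
          have hnsq : normSq ((p₁:ℂ) + (p₂:ℂ) * I) = 2 := by
            rw [normSq_int_pair]; exact_mod_cast hsum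
          have htr : normSq ((zseq k - (a k : ℂ)) - (starRingEnd ℂ) ((p₁:ℂ) + (p₂:ℂ) * I)) < 1 :=
            inv_duality _ _ hw0 hnsq htrig'
          have hconj : (starRingEnd ℂ) ((p₁:ℂ) + (p₂:ℂ) * I) = (p₁:ℂ) - (p₂:ℂ) * I := by
            simp only [map_add, map_mul, Complex.conj_I, map_intCast (starRingEnd ℂ)]
            ring
          rw [hconj] at htr
          have hIH := ihb p₁ p₂ hr1 hs1 htr
          have hid := key_identity ((Q ((k:ℤ)-1) : ℂ)) ((Q (k:ℤ) : ℂ)) ((p₁:ℂ) + (p₂:ℂ) * I) hnsq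
          rw [hconj] at hid
          have hcomm : normSq (((p₁:ℂ) + (p₂:ℂ) * I) * (Q (k:ℤ) : ℂ) + (Q ((k:ℤ)-1) : ℂ))
              = normSq ((Q ((k:ℤ)-1) : ℂ) + ((p₁:ℂ) + (p₂:ℂ) * I) * (Q (k:ℤ) : ℂ)) := by
            rw [add_comm]
          rw [hcomm]
          linarith
        rcases le_or_gt (p₁^2 + p₂^2) 1 with hsmall | hbig2
        · exfalso
          exact excluded_small _ hw0 hboxk.1 hboxk.2 p₁ p₂ hsmall htrig'
        · rcases sq_int_cases p₁ with h|h|h <;> rcases sq_int_cases p₂ with h'|h'|h' <;>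
            first
              | (exact absurd hbig2 (by omega))
              | (exact hsmallpath h h')
              | (exact hbigpath (by omega))
  constructor
  · rw [hQ0c]; simp
  · intro k hk
    have hmain := (main (k+1) (by omega) (by omega)).1
    have hidx : ((k+1:ℕ):ℤ) - 1 = (k:ℤ) := by push_cast; ring
    rw [hidx] at hmain
    rw [Complex.norm_def, Complex.norm_def]
    exact Real.sqrt_lt_sqrt (normSq_nonneg _) hmain
end

section
/- Let z ∈ ℂ, let {z_n} and {a_n} be the iteration sequence and partial quotients of z under the Hurwitz algorithm. Then for every legal index n ≥ 1, the iterate z_n lies in the region Φ^{−1} = {x + yi : (|x| − 1)² + y² ≥ 1 and x² + (|y| − 1)² ≥ 1}; consequently |z_n| ≥ √2 and the partial quotient a_n is a Gaussian integer not belonging to {0, 1, −1, i, −i}. -/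
set_option maxHeartbeats 1600000 in
/-- Let `z ∈ ℂ`, with iteration sequence `zseq` and partial quotients `a` under the Hurwitz
algorithm.  For every legal index `n ≥ 1`, the iterate `zₙ` lies in the region
`Φ⁻¹ = {x + yi : (|x| − 1)² + y² ≥ 1 and x² + (|y| − 1)² ≥ 1}`; consequently
`|zₙ| ≥ √2` and the partial quotient `aₙ` is a Gaussian integer not in `{0, ±1, ±i}`. -/
theorem hurwitz_iterates_in_inverse_region
    (z : ℂ) (zseq : ℕ → ℂ) (a : ℕ → GaussianInt)
    (n : ℕ) (hn : 1 ≤ n)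
    (hz0 : zseq 0 = z)
    (hnear : ∀ k ≤ n, |(zseq k - (a k : ℂ)).re| ≤ 1 / 2 ∧ |(zseq k - (a k : ℂ)).im| ≤ 1 / 2)
    (hiter : ∀ k < n, zseq (k + 1) = (zseq k - (a k : ℂ))⁻¹)
    (hlegal : ∀ k < n, zseq k ≠ (a k : ℂ)) :
    ((|(zseq n).re| - 1) ^ 2 + (zseq n).im ^ 2 ≥ 1 ∧
        (zseq n).re ^ 2 + (|(zseq n).im| - 1) ^ 2 ≥ 1) ∧
      Real.sqrt 2 ≤ ‖zseq n‖ ∧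
      a n ∉ ({0, 1, -1, ⟨0, 1⟩, ⟨0, -1⟩} : Set GaussianInt) := by
  obtain ⟨m, rfl⟩ : ∃ m, n = m + 1 := ⟨n - 1, (Nat.succ_pred_eq_of_pos hn).symm⟩
  have hm : m < m + 1 := Nat.lt_succ_self m
  set w : ℂ := zseq m - (a m : ℂ) with hw
  have hw0 : w ≠ 0 := sub_ne_zero.mpr (hlegal m hm)
  obtain ⟨hu, hv⟩ := hnear m (Nat.le_succ m)
  set u : ℝ := w.re
  set v : ℝ := w.im
  set d : ℝ := u ^ 2 + v ^ 2 with hdd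
  have hd : 0 < d := by
    have := Complex.normSq_pos.mpr hw0
    rw [Complex.normSq_apply] at this
    nlinarith [this]
  have hd' : d ≠ 0 := ne_of_gt hd
  have hzn : zseq (m + 1) = w⁻¹ := hiter m hm
  have hre : (zseq (m + 1)).re = u / d := by
    rw [hzn, Complex.inv_re, Complex.normSq_apply]
    show w.re / (w.re * w.re + w.im * w.im) = w.re / (w.re ^ 2 + w.im ^ 2)
    ring
  have him : (zseq (m + 1)).im = -v / d := by
    rw [hzn, Complex.inv_im, Complex.normSq_apply]
    show -w.im / (w.re * w.re + w.im * w.im) = -w.im / (w.re ^ 2 + w.im ^ 2)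
    ring
  have hu2 : u ^ 2 ≤ (1/2) ^ 2 := by nlinarith [sq_abs u, abs_nonneg u]
  have hv2 : v ^ 2 ≤ (1/2) ^ 2 := by nlinarith [sq_abs v, abs_nonneg v]
  have hdle : d ≤ 1 / 2 := by rw [hdd]; nlinarith
  -- region conditions
  have reg1 : (|(zseq (m+1)).re| - 1) ^ 2 + (zseq (m+1)).im ^ 2 ≥ 1 := by
    rw [hre, him, abs_div, abs_of_pos hd]
    have key : (|u| / d - 1) ^ 2 + (-v / d) ^ 2 = 1 + (1 - 2 * |u|) / d := by
      field_simp
      simp only [sq_abs, abs_mul_abs_self, hdd]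
      linear_combination sq_abs u
    rw [key]
    have : (1 - 2 * |u|) / d ≥ 0 := div_nonneg (by linarith) hd.le
    linarith
  have reg2 : (zseq (m+1)).re ^ 2 + (|(zseq (m+1)).im| - 1) ^ 2 ≥ 1 := by
    rw [hre, him, abs_div, abs_of_pos hd]
    have key : (u / d) ^ 2 + (|(-v)| / d - 1) ^ 2 = 1 + (1 - 2 * |(-v)|) / d := by
      rw [abs_neg]
      field_simp
      simp only [sq_abs, abs_mul_abs_self, hdd]
      linear_combination sq_abs v
    rw [key, abs_neg]
    have : (1 - 2 * |v|) / d ≥ 0 := div_nonneg (by linarith) hd.le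
    linarith
  -- absolute value bound
  have habs2 : 2 ≤ ‖zseq (m+1)‖ ^ 2 := by
    rw [Complex.sq_norm, Complex.normSq_apply, hre, him]
    have h2 : u / d * (u / d) + -v / d * (-v / d) = 1 / d := by
      field_simp
      linarith [hdd]
    rw [h2, le_div_iff₀ hd]
    linarith
  have habs : Real.sqrt 2 ≤ ‖zseq (m+1)‖ := by
    have := Real.sqrt_le_sqrt habs2
    rwa [Real.sqrt_sq (norm_nonneg _)] at this
  refine ⟨⟨reg1, reg2⟩, habs, ?_⟩
  -- exclusion of small partial quotients
  obtain ⟨hx, hy⟩ := hnear (m + 1) le_rfl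
  have hxy2 : 2 ≤ (zseq (m+1)).re ^ 2 + (zseq (m+1)).im ^ 2 := by
    have h := Complex.sq_norm (zseq (m+1))
    rw [Complex.normSq_apply] at h
    nlinarith [habs2]
  set x : ℝ := (zseq (m+1)).re
  set y : ℝ := (zseq (m+1)).im
  intro hmem
  simp only [Set.mem_insert_iff, Set.mem_singleton_iff] at hmem
  rcases hmem with h | h | h | h | h <;> rw [h] at hx hy
  · rw [GaussianInt.toComplex_zero] at hx hy
    simp only [sub_zero] at hx hy
    have h1 : x ^ 2 ≤ 1/4 := by nlinarith [sq_abs x, abs_nonneg x]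
    have h2 : y ^ 2 ≤ 1/4 := by nlinarith [sq_abs y, abs_nonneg y]
    linarith
  · rw [GaussianInt.toComplex_one] at hx hy
    simp only [Complex.sub_re, Complex.sub_im, Complex.one_re, Complex.one_im, sub_zero] at hx hy
    have hx1 : 1/2 ≤ x := by have := (abs_le.mp hx).1; linarith
    have hax : |x| = x := abs_of_nonneg (by linarith)
    rw [hax] at reg1
    have h1 : (x - 1) ^ 2 ≤ 1/4 := by nlinarith [sq_abs (x - 1), abs_nonneg (x - 1)]
    have h2 : y ^ 2 ≤ 1/4 := by nlinarith [sq_abs y, abs_nonneg y]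
    linarith
  · have hcast : ((-1 : GaussianInt) : ℂ) = -1 := by
      rw [GaussianInt.toComplex_neg, GaussianInt.toComplex_one]
    rw [hcast] at hx hy
    simp only [Complex.sub_re, Complex.sub_im, Complex.neg_re, Complex.neg_im, Complex.one_re,
      Complex.one_im, Complex.add_re, Complex.add_im, neg_zero, sub_neg_eq_add,
      sub_zero, add_zero] at hx hy
    have hx1 : x ≤ -1/2 := by have := (abs_le.mp hx).2; linarith
    have hax : |x| = -x := abs_of_nonpos (by linarith)
    rw [hax] at reg1
    have hrw : (-x - 1) ^ 2 = (x + 1) ^ 2 := by ring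
    rw [hrw] at reg1
    have h1 : (x + 1) ^ 2 ≤ 1/4 := by nlinarith [sq_abs (x + 1), abs_nonneg (x + 1)]
    have h2 : y ^ 2 ≤ 1/4 := by nlinarith [sq_abs y, abs_nonneg y]
    linarith
  · rw [GaussianInt.toComplex_def'] at hx hy
    simp only [Complex.sub_re, Complex.sub_im, Complex.add_re, Complex.add_im, Complex.mul_re,
      Complex.mul_im, Complex.I_re, Complex.I_im, Complex.ofReal_re, Complex.ofReal_im] at hx hy
    norm_num at hx hy
    have hy1 : 1/2 ≤ y := by have := (abs_le.mp hy).1; linarith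
    have hay : |y| = y := abs_of_nonneg (by linarith)
    rw [hay] at reg2
    have h1 : (y - 1) ^ 2 ≤ 1/4 := by nlinarith [sq_abs (y - 1), abs_nonneg (y - 1)]
    have h2 : x ^ 2 ≤ 1/4 := by nlinarith [sq_abs x, abs_nonneg x]
    linarith
  · rw [GaussianInt.toComplex_def'] at hx hy
    simp only [Complex.sub_re, Complex.sub_im, Complex.add_re, Complex.add_im, Complex.mul_re,
      Complex.mul_im, Complex.I_re, Complex.I_im, Complex.ofReal_re, Complex.ofReal_im] at hx hy
    norm_num at hx hy
    have hy1 : y ≤ -1/2 := by have := (abs_le.mp hy).2; linarith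
    have hay : |y| = -y := abs_of_nonpos (by linarith)
    rw [hay] at reg2
    have hrw : (-y - 1) ^ 2 = (y + 1) ^ 2 := by ring
    rw [hrw] at reg2
    have h1 : (y + 1) ^ 2 ≤ 1/4 := by nlinarith [sq_abs (y + 1), abs_nonneg (y + 1)]
    have h2 : x ^ 2 ≤ 1/4 := by nlinarith [sq_abs x, abs_nonneg x]
    linarith
end

section
/- Let z ∈ ℂ have Hurwitz continued fraction expansion with associated Q-pair (P_k, Q_k). Then for every legal index k with 0 ≤ k ≤ m − 1, |Q_{k−1}·z − P_{k−1}| ≥ √2 · |Q_k·z − P_k|. In particular, for z = (x+yi)/w and S_k = (x+yi)·Q_k − w·P_k, one has |S_{k−1}| ≥ √2 · |S_k|. -/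
/-- Let `z ∈ ℂ` have Hurwitz continued fraction expansion with partial quotients `a` and
associated Q-pair `(P, Q)`.  Then for every legal index `k` with `0 ≤ k ≤ m − 1` (i.e. the
expansion does not terminate at or before step `k`),
`|Qₖ₋₁ z − Pₖ₋₁| ≥ √2 · |Qₖ z − Pₖ|`. -/
theorem remainders_decrease_by_sqrt_two
    (z : ℂ) (zseq : ℕ → ℂ) (a : ℕ → GaussianInt)
    (P Q : ℤ → GaussianInt)
    (hP1 : P (-1) = 1) (hP0 : P 0 = a 0)
    (hPrec : ∀ j : ℕ, P ((j : ℤ) + 1) = a (j + 1) * P j + P ((j : ℤ) - 1))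
    (hQ1 : Q (-1) = 0) (hQ0 : Q 0 = 1)
    (hQrec : ∀ j : ℕ, Q ((j : ℤ) + 1) = a (j + 1) * Q j + Q ((j : ℤ) - 1))
    (k : ℕ)
    (hz0 : zseq 0 = z)
    (hnear : ∀ j ≤ k + 1, |(zseq j - (a j : ℂ)).re| ≤ 1 / 2 ∧ |(zseq j - (a j : ℂ)).im| ≤ 1 / 2)
    (hiter : ∀ j ≤ k, zseq (j + 1) = (zseq j - (a j : ℂ))⁻¹)
    (hlegal : ∀ j ≤ k, zseq j ≠ (a j : ℂ)) :
    Real.sqrt 2 * ‖(Q k : ℂ) * z - (P k : ℂ)‖ ≤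
      ‖(Q ((k : ℤ) - 1) : ℂ) * z - (P ((k : ℤ) - 1) : ℂ)‖ := by
  -- the remainders
  set r : ℤ → ℂ := fun n => (Q n : ℂ) * z - (P n : ℂ) with hr
  have key : ∀ j : ℕ, j ≤ k →
      r ((j : ℤ) - 1) = - zseq (j + 1) * r j := by
    intro j
    induction j with
    | zero =>
      intro _
      have hne : zseq 0 - (a 0 : ℂ) ≠ 0 := sub_ne_zero.mpr (hlegal 0 (Nat.zero_le k))
      have h1 : zseq 1 = (zseq 0 - (a 0 : ℂ))⁻¹ := hiter 0 (Nat.zero_le k)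
      simp only [hr]
      norm_num [hQ1, hQ0, hP1, hP0, h1, hz0.symm]
      exact (inv_mul_cancel₀ hne).symm
    | succ j ih =>
      intro hj
      have hjk : j ≤ k := Nat.le_of_succ_le hj
      have ihj := ih hjk
      have hcast : ((j + 1 : ℕ) : ℤ) - 1 = (j : ℤ) := by push_cast; ring
      have hcast2 : ((j + 1 : ℕ) : ℤ) = (j : ℤ) + 1 := by push_cast; ring
      have hne : zseq (j + 1) - (a (j + 1) : ℂ) ≠ 0 :=
        sub_ne_zero.mpr (hlegal (j + 1) hj)
      have h1 : zseq (j + 2) = (zseq (j + 1) - (a (j + 1) : ℂ))⁻¹ := hiter (j + 1) hj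
      -- r (j+1) = (a (j+1) - zseq (j+1)) * r j
      have hrrec : r ((j : ℤ) + 1) = ((a (j + 1) : ℂ) - zseq (j + 1)) * r j := by
        have ihj' : (Q ((j:ℤ) - 1) : ℂ) * z - (P ((j:ℤ) - 1) : ℂ) =
            -zseq (j + 1) * ((Q (j:ℤ) : ℂ) * z - (P (j:ℤ) : ℂ)) := ihj
        simp only [hr, hQrec j, hPrec j, map_add, map_mul]
        linear_combination ihj'
      rw [hcast, hcast2, hrrec, h1]
      have : -((zseq (j + 1) - (a (j + 1) : ℂ))⁻¹) *
          (((a (j + 1) : ℂ) - zseq (j + 1)) * r (j : ℤ)) =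
          ((zseq (j + 1) - (a (j + 1) : ℂ))⁻¹ * (zseq (j + 1) - (a (j + 1) : ℂ))) * r (j : ℤ) := by
        ring
      rw [this, inv_mul_cancel₀ hne, one_mul]
  have hkey := key k le_rfl
  rw [show ((Q ((k : ℤ) - 1) : ℂ) * z - (P ((k : ℤ) - 1) : ℂ)) = r ((k:ℤ) - 1) from rfl,
    show ((Q (k : ℤ) : ℂ) * z - (P (k : ℤ) : ℂ)) = r (k : ℤ) from rfl, hkey]
  rw [norm_mul, norm_neg]
  -- now bound |zseq (k+1)| from below by √2
  have h1 : zseq (k + 1) = (zseq k - (a k : ℂ))⁻¹ := hiter k le_rfl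
  have hne : zseq k - (a k : ℂ) ≠ 0 := sub_ne_zero.mpr (hlegal k le_rfl)
  obtain ⟨hre, him⟩ := hnear k (Nat.le_succ k)
  have hpos : 0 < ‖zseq k - (a k : ℂ)‖ := by
    simpa using (norm_pos_iff.mpr hne)
  have hsq : ‖zseq k - (a k : ℂ)‖ ^ 2 ≤ 1 / 2 := by
    rw [Complex.sq_norm, Complex.normSq_apply]
    nlinarith [abs_nonneg (zseq k - (a k : ℂ)).re, abs_nonneg (zseq k - (a k : ℂ)).im,
      sq_abs (zseq k - (a k : ℂ)).re, sq_abs (zseq k - (a k : ℂ)).im]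
  have h2 : Real.sqrt 2 ≤ ‖zseq (k + 1)‖ := by
    rw [h1, norm_inv]
    rw [le_inv_comm₀ (by positivity) hpos]
    have h := Real.sqrt_le_sqrt hsq
    rwa [Real.sqrt_sq hpos.le, show (1:ℝ)/2 = 2⁻¹ by norm_num, Real.sqrt_inv] at h
  exact mul_le_mul_of_nonneg_right h2 (norm_nonneg _)
end

section
/- Let w > 0 and r, t be real numbers satisfying the four conditions: r² + t² < w², (r + w)² + t² > w², (r + w)² + t² > 2(r² + t²), and ((r + w)² + t²)·(r² + t²) ≤ w⁴. Then (r + w)² + t² ≤ ((√5 + 1)/2)² · w². -/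
/-- Let `w > 0` and `r, t` be real numbers satisfying `r² + t² < w²`,
`(r + w)² + t² > w²`, `(r + w)² + t² > 2(r² + t²)` and
`((r + w)² + t²)(r² + t²) ≤ w⁴`.  Then `(r + w)² + t² ≤ ((√5 + 1)/2)² w²`. -/
theorem bound_by_golden_ratio_squared
    (w r t : ℝ) (hw : 0 < w)
    (h1 : r ^ 2 + t ^ 2 < w ^ 2)
    (h2 : (r + w) ^ 2 + t ^ 2 > w ^ 2)
    (h3 : (r + w) ^ 2 + t ^ 2 > 2 * (r ^ 2 + t ^ 2))
    (h4 : ((r + w) ^ 2 + t ^ 2) * (r ^ 2 + t ^ 2) ≤ w ^ 4) :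
    (r + w) ^ 2 + t ^ 2 ≤ ((Real.sqrt 5 + 1) / 2) ^ 2 * w ^ 2 := by
  set s := Real.sqrt 5 with hsdef
  have hs : s ^ 2 = 5 := Real.sq_sqrt (by norm_num)
  have hs2 : (2:ℝ) ≤ s := by nlinarith [Real.sqrt_nonneg 5, hs]
  clear_value s
  by_contra h
  push_neg at h
  have hB0 : (0:ℝ) ≤ r ^ 2 + t ^ 2 := by positivity
  have hw2 : (0:ℝ) < w ^ 2 := by positivity
  have hsw : s ^ 2 * w ^ 2 = 5 * w ^ 2 := by rw [hs]
  have hsw4 : s ^ 2 * (w ^ 2 * w ^ 2) = 5 * (w ^ 2 * w ^ 2) := by rw [hs]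
  -- A > (3+s)/2 · w²
  have hA' : (3 + s) / 2 * w ^ 2 < (r + w) ^ 2 + t ^ 2 := by linarith [h, hsw]
  -- B ≤ (3-s)/2 · w²
  have hBle : r ^ 2 + t ^ 2 ≤ (3 - s) / 2 * w ^ 2 := by
    by_contra hc
    push_neg at hc
    have h5 : ((3 + s) / 2 * w ^ 2) * ((3 - s) / 2 * w ^ 2)
        < ((3 + s) / 2 * w ^ 2) * (r ^ 2 + t ^ 2) :=
      mul_lt_mul_of_pos_left hc (by nlinarith [hs2, hw2])
    have h6 : ((3 + s) / 2 * w ^ 2) * (r ^ 2 + t ^ 2)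
        ≤ ((r + w) ^ 2 + t ^ 2) * (r ^ 2 + t ^ 2) :=
      mul_le_mul_of_nonneg_right hA'.le hB0
    linarith [h5, h6, h4, hsw4]
  -- P := A - B - w² > (s-1)w² > 0
  have hP : (s - 1) * w ^ 2 < (r + w) ^ 2 + t ^ 2 - (r ^ 2 + t ^ 2) - w ^ 2 := by
    linarith [hA', hBle]
  have hPpos : (0:ℝ) < (s - 1) * w ^ 2 := mul_pos (by linarith) hw2
  -- key identity: P² = 4r²w² ≤ 4Bw²
  have hkey : ((r + w) ^ 2 + t ^ 2 - (r ^ 2 + t ^ 2) - w ^ 2) ^ 2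
      ≤ 4 * (r ^ 2 + t ^ 2) * w ^ 2 := by
    have h0 : ((r + w) ^ 2 + t ^ 2 - (r ^ 2 + t ^ 2) - w ^ 2) ^ 2 = 4 * (r * w) ^ 2 := by
      ring
    have h1 : 4 * (r ^ 2 + t ^ 2) * w ^ 2 = 4 * (r * w) ^ 2 + 4 * (t * w) ^ 2 := by
      ring
    rw [h0, h1]
    linarith [sq_nonneg (t * w)]
  have hsq : ((s - 1) * w ^ 2) ^ 2
      < ((r + w) ^ 2 + t ^ 2 - (r ^ 2 + t ^ 2) - w ^ 2) ^ 2 :=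
    pow_lt_pow_left₀ hP hPpos.le two_ne_zero
  have hBw : 4 * (r ^ 2 + t ^ 2) * w ^ 2 ≤ 4 * ((3 - s) / 2 * w ^ 2) * w ^ 2 := by
    linarith [mul_le_mul_of_nonneg_right hBle hw2.le]
  linarith [hkey, hsq, hBw, hsw4]
end

section
/- Let w be a positive integer and x, y integers with w dividing x² + y² + 1. Then there exist Gaussian integers p and q with q ≠ 0 such that |q|² + |q·(x+yi) − p·w|² = w, where |·|² denotes the norm of a Gaussian integer. In particular, writing q = c + di and q·(x+yi) − p·w = a + bi with a, b, c, d ∈ ℤ, one has w = a² + b² + c² + d². -/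
/-!
For `z = x + yi` the pairs `(q, q z - p w)` with `p, q ∈ ℤ[i]` form a lattice in `ℤ[i]² ≅ ℤ⁴` of
covolume `w²`, and on it `N q + N (q z - p w) ≡ N q (1 + N z) ≡ 0 [ZMOD w]`. The open ball of
squared radius `2 w` has volume `2 π² w² > 2⁴ w²`, so by Minkowski it contains a nonzero lattice
point, whose squared length is then a positive multiple of `w` below `2 w`, i.e. exactly `w`.
If that point has `q = 0`, then `w² N p = w` forces `w = 1`, where `q = 1, p = z` works.
-/

open MeasureTheory Module Matrix Real

theorem Int.eq_of_dvd_of_pos_of_lt_two_mul {a b : ℤ} (ha : 0 < a) (hdvd : b ∣ a)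
    (hlt : a < 2 * b) : a = b := by
  lift a to ℕ using ha.le
  lift b to ℕ using by linarith
  exact_mod_cast Nat.eq_of_dvd_of_lt_two_mul (by omega) (by exact_mod_cast hdvd)
    (by exact_mod_cast hlt)

theorem setOf_sum_sq_lt_eq_preimage_ball {ι : Type*} [Fintype ι] (R : ℝ) :
    {v : ι → ℝ | ∑ i, v i ^ 2 < R} = WithLp.toLp 2 ⁻¹' Metric.ball 0 √R := by
  ext v
  simp [EuclideanSpace.norm_eq, Real.sqrt_lt_sqrt_iff (Finset.sum_nonneg fun i _ ↦ sq_nonneg (v i))]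

theorem volume_setOf_sum_sq_lt_fin_four {R : ℝ} (hR : 0 ≤ R) :
    volume {v : Fin 4 → ℝ | ∑ i, v i ^ 2 < R} = ENNReal.ofReal (π ^ 2 * R ^ 2 / 2) := by
  rw [setOf_sum_sq_lt_eq_preimage_ball R, (PiLp.volume_preserving_toLp (Fin 4)).measure_preimage
    measurableSet_ball.nullMeasurableSet, EuclideanSpace.volume_ball, Fintype.card_fin,
    ← ENNReal.ofReal_pow (sqrt_nonneg R), ← ENNReal.ofReal_mul (by positivity)]
  have hΓ : Gamma ((4 : ℕ) / 2 + 1) = 2 := by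
    rw [show ((4 : ℕ) : ℝ) / 2 + 1 = (2 : ℕ) + 1 by norm_num, Gamma_nat_eq_factorial]
    norm_num
  have h4 : ∀ t : ℝ, 0 ≤ t → √t ^ 4 = t ^ 2 := fun t ht ↦ by
    rw [show 4 = 2 * 2 by rfl, pow_mul, sq_sqrt ht]
  rw [hΓ, h4 R hR, h4 π pi_nonneg]
  ring_nf

theorem Matrix.exists_ne_zero_vecMul_mem_of_volume_lt {ι : Type*} [Fintype ι] [DecidableEq ι]
    (A : Matrix ι ι ℤ) (hA : A.det ≠ 0) {s : Set (ι → ℝ)} (h_symm : ∀ v ∈ s, -v ∈ s)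
    (h_conv : Convex ℝ s) (h : ENNReal.ofReal |(A.det : ℝ)| * 2 ^ Fintype.card ι < volume s) :
    ∃ c : ι → ℤ, c ᵥ* A ≠ 0 ∧ (fun j ↦ ((c ᵥ* A) j : ℝ)) ∈ s := by
  set AR : Matrix ι ι ℝ := A.map (Int.cast : ℤ → ℝ)
  have hdet : AR.det = A.det := (Int.cast_det A).symm
  have hli : LinearIndependent ℝ fun i ↦ AR i :=
    linearIndependent_rows_of_det_ne_zero (by rw [hdet]; exact_mod_cast hA)
  let b : Basis ι ℝ (ι → ℝ) := basisOfLinearIndependentOfCardEqFinrank' _ hli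
    (Module.finrank_fintype_fun_eq_card ℝ).symm
  have hb : ⇑b = fun i ↦ AR i := coe_basisOfLinearIndependentOfCardEqFinrank' ..
  have hvol : volume (ZSpan.fundamentalDomain b) = ENNReal.ofReal |(A.det : ℝ)| := by
    rw [ZSpan.volume_fundamentalDomain, ← hdet, hb]
    rfl
  have : Countable (Submodule.span ℤ (Set.range b)).toAddSubgroup :=
    inferInstanceAs (Countable (Submodule.span ℤ (Set.range b)))
  obtain ⟨⟨u, hu⟩, hu0, hus⟩ := exists_ne_zero_mem_lattice_of_measure_mul_two_pow_lt_measure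
    (ZSpan.isAddFundamentalDomain' b volume) h_symm h_conv
    (by rwa [hvol, Module.finrank_fintype_fun_eq_card])
  obtain ⟨c, rfl⟩ := (Submodule.mem_span_range_iff_exists_fun ℤ).mp hu
  have hcoord : (∑ i, c i • b i) = fun j ↦ ((c ᵥ* A) j : ℝ) := by
    ext j
    simp [hb, Matrix.vecMul, dotProduct, AR]
  refine ⟨c, ?_, hcoord ▸ hus⟩
  intro h
  exact hu0 (Subtype.ext (hcoord.trans (funext fun j ↦ by simp [h])))

theorem Matrix.exists_ne_zero_sum_sq_vecMul_lt (A : Matrix (Fin 4) (Fin 4) ℤ) (hA : A.det ≠ 0)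
    {R : ℝ} (hR : 0 ≤ R) (h : 32 * |(A.det : ℝ)| < π ^ 2 * R ^ 2) :
    ∃ c : Fin 4 → ℤ, c ᵥ* A ≠ 0 ∧ ∑ j, ((c ᵥ* A) j : ℝ) ^ 2 < R := by
  refine A.exists_ne_zero_vecMul_mem_of_volume_lt hA (s := {v | ∑ i, v i ^ 2 < R})
    (by simp) ?_ ?_
  · rw [setOf_sum_sq_lt_eq_preimage_ball]
    exact (convex_ball 0 √R).linear_preimage (WithLp.linearEquiv 2 ℝ (Fin 4 → ℝ)).symm.toLinearMap
  · have hdet : (0 : ℝ) < |(A.det : ℝ)| := abs_pos.2 (Int.cast_ne_zero.2 hA)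
    rw [volume_setOf_sum_sq_lt_fin_four hR, Fintype.card_fin, ← ENNReal.ofReal_ofNat,
      ← ENNReal.ofReal_pow zero_le_two, ← ENNReal.ofReal_mul (abs_nonneg _),
      ENNReal.ofReal_lt_ofReal_iff (by linarith)]
    linarith

namespace GaussianInt

/-- Row `i` is the image of the `i`-th of `q = 1, q = i, p = -1, p = -i` under
`(q, p) ↦ (q, q z - p w)`, written in coordinates `(re q, im q, re (q z - p w), im (q z - p w))`. -/
def latticeMatrix (w : ℕ) (z : GaussianInt) : Matrix (Fin 4) (Fin 4) ℤ :=
  !![1, 0, z.re, z.im; 0, 1, -z.im, z.re; 0, 0, w, 0; 0, 0, 0, w]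

theorem det_latticeMatrix (w : ℕ) (z : GaussianInt) : (latticeMatrix w z).det = (w : ℤ) ^ 2 := by
  rw [det_of_isUpperTriangular fun i j hij ↦ by
    fin_cases i <;> fin_cases j <;> simp_all [latticeMatrix]]
  simp [latticeMatrix, Fin.prod_univ_four, sq]

theorem vecMul_latticeMatrix (w : ℕ) (z p q : GaussianInt) :
    ![q.re, q.im, -p.re, -p.im] ᵥ* latticeMatrix w z =
      ![q.re, q.im, (q * z - p * w).re, (q * z - p * w).im] := by
  ext j
  fin_cases j <;>
    simp only [latticeMatrix, vecMul, dotProduct, Fin.sum_univ_four, of_apply, cons_val', cons_val,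
      Fin.zero_eta, Fin.mk_one, Fin.reduceFinMk, Fin.isValue,
      cons_val_zero, cons_val_one, cons_val_fin_one, Zsqrtd.re_sub, Zsqrtd.re_mul, Zsqrtd.im_sub,
      Zsqrtd.im_mul, Zsqrtd.re_natCast, Zsqrtd.im_natCast] <;> ring

theorem dvd_norm_add_norm_mul_sub {w : ℕ} {z : GaussianInt} (hz : (w : ℤ) ∣ z.norm + 1)
    (p q : GaussianInt) :
    (w : ℤ) ∣ q.norm + (q * z - p * w).norm := by
  obtain ⟨t, ht⟩ := hz
  have hqz : (q * z).norm = q.norm * z.norm := Zsqrtd.norm_mul q z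
  generalize q * z = a at hqz ⊢
  refine ⟨q.norm * t - 2 * (a.re * p.re + a.im * p.im) + w * p.norm, ?_⟩
  simp only [Zsqrtd.norm_def] at hqz ht ⊢
  simp only [Zsqrtd.re_sub, Zsqrtd.re_mul, Zsqrtd.im_sub, Zsqrtd.im_mul, Zsqrtd.re_natCast,
    Zsqrtd.im_natCast]
  linear_combination hqz + (q.re * q.re + q.im * q.im) * ht

theorem exists_norm_add_norm_mul_sub_lt_two_mul {w : ℕ} (hw : 0 < w) (z : GaussianInt) :
    ∃ p q : GaussianInt, 0 < q.norm + (q * z - p * w).norm ∧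
      q.norm + (q * z - p * w).norm < 2 * w := by
  have hdet : (latticeMatrix w z).det ≠ 0 := by
    rw [det_latticeMatrix]
    positivity
  obtain ⟨c, hc0, hlt⟩ := (latticeMatrix w z).exists_ne_zero_sum_sq_vecMul_lt hdet
    (R := 2 * w) (by positivity) (by
      rw [det_latticeMatrix]
      have h8 : (8 : ℝ) < π ^ 2 := by nlinarith [pi_gt_three]
      push_cast
      rw [abs_of_nonneg (by positivity)]
      nlinarith [mul_pos (sub_pos.2 h8) (pow_pos (Nat.cast_pos.2 hw : (0 : ℝ) < w) 2)])
  set q : GaussianInt := ⟨c 0, c 1⟩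
  set p : GaussianInt := ⟨-c 2, -c 3⟩
  have hc : c = ![q.re, q.im, -p.re, -p.im] := by
    ext i; fin_cases i <;> simp [q, p]
  rw [hc, vecMul_latticeMatrix] at hc0 hlt
  set r := q * z - p * w
  refine ⟨p, q, ?_, ?_⟩
  · have hqr : q ≠ 0 ∨ r ≠ 0 := by
      contrapose! hc0
      rw [hc0.2, hc0.1]
      ext i; fin_cases i <;> rfl
    rcases hqr with h | h
    · linarith [norm_pos.2 h, norm_nonneg r]
    · linarith [norm_pos.2 h, norm_nonneg q]
  · have hsum : ∑ j, (![q.re, q.im, r.re, r.im] j : ℝ) ^ 2 = ((q.norm + r.norm : ℤ) : ℝ) := by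
      simp only [Fin.sum_univ_four, cons_val_zero, cons_val_one, cons_val, Zsqrtd.norm_def]
      push_cast
      ring
    exact_mod_cast hsum ▸ hlt

theorem eq_one_of_norm_mul_natCast_eq {w : ℕ} (hw : 0 < w) (p : GaussianInt)
    (h : (p * w).norm = w) : w = 1 := by
  rw [Zsqrtd.norm_mul, Zsqrtd.norm_natCast, ← mul_assoc] at h
  have h1 : p.norm * w = 1 := mul_right_cancel₀ (by positivity) (h.trans (one_mul _).symm)
  exact_mod_cast Int.eq_one_of_mul_eq_one_left (Nat.cast_nonneg w) h1

end GaussianInt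

theorem exists_four_squares_representation_general
    (w : ℕ) (x y : ℤ) (hxy : (w : ℤ) ∣ x ^ 2 + y ^ 2 + 1) :
    ∃ p q : GaussianInt, q ≠ 0 ∧
      Zsqrtd.norm q + Zsqrtd.norm (q * ⟨x, y⟩ - p * (w : GaussianInt)) = w ∧
      (w : ℤ) = (q * ⟨x, y⟩ - p * (w : GaussianInt)).re ^ 2
          + (q * ⟨x, y⟩ - p * (w : GaussianInt)).im ^ 2 + q.re ^ 2 + q.im ^ 2 := by
  set z : GaussianInt := ⟨x, y⟩
  have hz : (w : ℤ) ∣ z.norm + 1 := by simpa [z, Zsqrtd.norm_def, sq] using hxy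
  have hw : 0 < w := Nat.pos_of_ne_zero <| by
    rintro rfl
    rw [Nat.cast_zero, zero_dvd_iff] at hxy
    exact absurd hxy (by positivity)
  obtain ⟨p, q, hpos, hlt⟩ := GaussianInt.exists_norm_add_norm_mul_sub_lt_two_mul hw z
  have hnorm := Int.eq_of_dvd_of_pos_of_lt_two_mul hpos
    (GaussianInt.dvd_norm_add_norm_mul_sub hz p q) hlt
  rcases eq_or_ne q 0 with rfl | hq
  · obtain rfl : w = 1 := GaussianInt.eq_one_of_norm_mul_natCast_eq hw p (by simpa using hnorm)
    exact ⟨z, 1, one_ne_zero, by simp, by simp⟩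
  · refine ⟨p, q, hq, hnorm, ?_⟩
    rw [← hnorm, Zsqrtd.norm_def, Zsqrtd.norm_def]
    ring

/-- Let `w` be a positive integer and `x, y` integers with `w ∣ x² + y² + 1`.  Then there
exist Gaussian integers `p` and `q` with `q ≠ 0` such that
`|q|² + |q(x+yi) − pw|² = w`; in particular, writing `q = c + di` and
`q(x+yi) − pw = a + bi`, one has `w = a² + b² + c² + d²`. -/
theorem exists_four_squares_representation
    (w : ℕ) (hw : 0 < w) (x y : ℤ) (hxy : (w : ℤ) ∣ x ^ 2 + y ^ 2 + 1) :
    ∃ p q : GaussianInt, q ≠ 0 ∧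
      Zsqrtd.norm q + Zsqrtd.norm (q * ⟨x, y⟩ - p * (w : GaussianInt)) = w ∧
      (w : ℤ) = (q * ⟨x, y⟩ - p * (w : GaussianInt)).re ^ 2
          + (q * ⟨x, y⟩ - p * (w : GaussianInt)).im ^ 2 + q.re ^ 2 + q.im ^ 2 :=
  exists_four_squares_representation_general w x y hxy
end

section
/- Let w be a positive integer and x, y integers with w dividing x² + y² + 1. Suppose p, q are Gaussian integers with |q|² + |p·w − q·(x+yi)|² = w. Set q' = conjugate(p·w − q·(x+yi)). Then there exists a Gaussian integer p' such that q'·(x+yi) − p'·w = conjugate(q), and consequently |q'|² + |q'·(x+yi) − p'·w|² = w. -/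
/-- Let `w` be a positive integer and `x, y` integers with `w ∣ x² + y² + 1`.  Suppose
`p, q` are Gaussian integers with `|q|² + |pw − q(x+yi)|² = w`.  Set
`q' = conj (pw − q(x+yi))`.  Then there exists a Gaussian integer `p'` such that
`q'(x+yi) − p'w = conj q`, and consequently `|q'|² + |q'(x+yi) − p'w|² = w`. -/
theorem conjugate_representation
    (w : ℕ) (hw : 0 < w) (x y : ℤ) (hxy : (w : ℤ) ∣ x ^ 2 + y ^ 2 + 1)
    (p q : GaussianInt)
    (hpq : Zsqrtd.norm q + Zsqrtd.norm (p * (w : GaussianInt) - q * ⟨x, y⟩) = w) :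
    ∃ p' : GaussianInt,
      star (p * (w : GaussianInt) - q * ⟨x, y⟩) * ⟨x, y⟩ - p' * (w : GaussianInt) = star q ∧
      Zsqrtd.norm (star (p * (w : GaussianInt) - q * ⟨x, y⟩)) +
        Zsqrtd.norm (star (p * (w : GaussianInt) - q * ⟨x, y⟩) * ⟨x, y⟩
          - p' * (w : GaussianInt)) = w := by
  obtain ⟨k, hk⟩ := hxy
  set z : GaussianInt := ⟨x, y⟩ with hz
  have hzz : star z * z = ((x ^ 2 + y ^ 2 : ℤ) : GaussianInt) := by
    ext <;> simp only [hz, Zsqrtd.star_mk, Zsqrtd.re_mul, Zsqrtd.im_mul, Zsqrtd.re_intCast, Zsqrtd.im_intCast] <;> ring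
  refine ⟨star p * z - star q * (k : GaussianInt), ?_, ?_⟩
  · have h1 : star (p * (w : GaussianInt) - q * z) =
        star p * (w : GaussianInt) - star q * star z := by
      simp [star_sub, star_mul, mul_comm]
    rw [h1]
    have hk' : ((x ^ 2 + y ^ 2 + 1 : ℤ) : GaussianInt) = (w : GaussianInt) * (k : GaussianInt) := by
      rw [hk]; push_cast; ring
    have : star q * (star z * z) + star q = star q * ((w : GaussianInt) * (k : GaussianInt)) := by
      rw [hzz, ← hk']; push_cast; ring
    linear_combination -this
  · rw [show star (p * (w : GaussianInt) - q * z) * z -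
        (star p * z - star q * (k : GaussianInt)) * (w : GaussianInt) = star q from ?_]
    · rw [Zsqrtd.norm_conj, Zsqrtd.norm_conj, add_comm]; exact hpq
    · have h1 : star (p * (w : GaussianInt) - q * z) =
          star p * (w : GaussianInt) - star q * star z := by
        simp [star_sub, star_mul, mul_comm]
      rw [h1]
      have hk' : ((x ^ 2 + y ^ 2 + 1 : ℤ) : GaussianInt) = (w : GaussianInt) * (k : GaussianInt) := by
        rw [hk]; push_cast; ring
      have : star q * (star z * z) + star q = star q * ((w : GaussianInt) * (k : GaussianInt)) := by
        rw [hzz, ← hk']; push_cast; ring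
      linear_combination -this
end

section
/- For every rational complex number z ∈ ℚ(i), the Hurwitz continued fraction algorithm terminates in finitely many steps: there exists an index m such that the iterate z_m equals its nearest Gaussian integer a_m (equivalently, the algorithm produces a finite expansion [a₀; a₁, …, a_m]). -/
/-! Writing `zₙ = pₙ / qₙ` with Gaussian integers, the next iterate is `qₙ / (pₙ - aₙ qₙ)`, and
the nearest-integer condition gives `|pₙ/qₙ - aₙ|² ≤ 1/2`, so the new denominator has norm at
most half that of `qₙ`; descent on this norm ends the algorithm. -/

open Complex

theorem Complex.normSq_le_half_of_abs_re_le_of_abs_im_le {w : ℂ} (hre : |w.re| ≤ 1 / 2)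
    (him : |w.im| ≤ 1 / 2) : normSq w ≤ 1 / 2 := by
  have hre2 : w.re ^ 2 ≤ (1 / 2) ^ 2 := sq_le_sq' (neg_le_of_abs_le hre) (le_of_abs_le hre)
  have him2 : w.im ^ 2 ≤ (1 / 2) ^ 2 := sq_le_sq' (neg_le_of_abs_le him) (le_of_abs_le him)
  rw [normSq_apply]
  nlinarith

namespace GaussianInt

theorem exists_eq_div_of_rat (u v : ℚ) :
    ∃ p q : GaussianInt, q ≠ 0 ∧ (u : ℂ) + (v : ℂ) * I = (p : ℂ) / (q : ℂ) := by
  refine ⟨⟨u.num * v.den, v.num * u.den⟩, ⟨u.den * v.den, 0⟩, ?_, ?_⟩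
  · simp [Zsqrtd.ext_iff, u.den_nz, v.den_nz]
  · have hud : ((u.den : ℤ) : ℂ) ≠ 0 := by exact_mod_cast u.den_nz
    have hvd : ((v.den : ℤ) : ℂ) ≠ 0 := by exact_mod_cast v.den_nz
    rw [toComplex_def', toComplex_def', Rat.cast_def, Rat.cast_def]
    push_cast
    field_simp
    ring

theorem norm_sub_mul_lt {p q c : GaussianInt} (hq : q ≠ 0)
    (hre : |((p : ℂ) / q - c).re| ≤ 1 / 2) (him : |((p : ℂ) / q - c).im| ≤ 1 / 2) :
    (p - c * q).norm < q.norm := by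
  have hqC : (q : ℂ) ≠ 0 := toComplex_eq_zero.not.mpr hq
  have hsmall := normSq_le_half_of_abs_re_le_of_abs_im_le hre him
  have hqpos : 0 < normSq (q : ℂ) := normSq_pos.mpr hqC
  have hfactor : ((p - c * q : GaussianInt) : ℂ) = ((p : ℂ) / q - c) * q := by
    rw [toComplex_sub, toComplex_mul]
    field_simp
  suffices ((p - c * q).norm : ℝ) < q.norm by exact_mod_cast this
  rw [intCast_real_norm, intCast_real_norm, hfactor, normSq_mul]
  nlinarith

end GaussianInt

section HurwitzIteration

variable {zseq : ℕ → ℂ} {a : ℕ → GaussianInt}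

theorem hurwitz_terminates_of_eq_div
    (hnear : ∀ n, |(zseq n - (a n : ℂ)).re| ≤ 1 / 2 ∧ |(zseq n - (a n : ℂ)).im| ≤ 1 / 2)
    (hiter : ∀ n, zseq n ≠ (a n : ℂ) → zseq (n + 1) = (zseq n - (a n : ℂ))⁻¹)
    {n : ℕ} {p q : GaussianInt} (hq : q ≠ 0) (hzn : zseq n = (p : ℂ) / q) :
    ∃ m, zseq m = (a m : ℂ) := by
  induction hN : q.norm.natAbs using Nat.strong_induction_on generalizing n p q with
  | _ N ih =>
  by_cases hstop : zseq n = (a n : ℂ)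
  · exact ⟨n, hstop⟩
  set r := p - a n * q
  have hqC : (q : ℂ) ≠ 0 := GaussianInt.toComplex_eq_zero.not.mpr hq
  have hsub : zseq n - (a n : ℂ) = (r : ℂ) / q := by
    rw [hzn, GaussianInt.toComplex_sub, GaussianInt.toComplex_mul]
    field_simp
  have hr : r ≠ 0 := by
    rintro hr0
    rw [hr0, GaussianInt.toComplex_zero, zero_div, sub_eq_zero] at hsub
    exact hstop hsub
  have hlt : r.norm < q.norm := by
    obtain ⟨hre, him⟩ := hnear n
    rw [hzn] at hre him
    exact GaussianInt.norm_sub_mul_lt hq hre him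
  have hnext : zseq (n + 1) = (q : ℂ) / r := by rw [hiter n hstop, hsub, inv_div]
  exact ih _ (hN ▸ Int.natAbs_lt_natAbs_of_nonneg_of_lt r.norm_nonneg hlt) hr hnext rfl

end HurwitzIteration

/-- For every rational complex number `z ∈ ℚ(i)`, the Hurwitz continued fraction algorithm
terminates in finitely many steps: if `zseq` is the iteration sequence and `a` the partial
quotients (so `zseq 0 = z`, `a n` is a nearest Gaussian integer to `zseq n`, and
`zseq (n+1) = (zseq n − a n)⁻¹` whenever `zseq n ≠ a n`), then there exists an index `m`
with `zseq m = a m`. -/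
theorem hurwitz_terminates_on_rationals
    (z : ℂ) (hrat : ∃ u v : ℚ, z = (u : ℂ) + (v : ℂ) * Complex.I)
    (zseq : ℕ → ℂ) (a : ℕ → GaussianInt)
    (hz0 : zseq 0 = z)
    (hnear : ∀ n, |(zseq n - (a n : ℂ)).re| ≤ 1 / 2 ∧ |(zseq n - (a n : ℂ)).im| ≤ 1 / 2)
    (hiter : ∀ n, zseq n ≠ (a n : ℂ) → zseq (n + 1) = (zseq n - (a n : ℂ))⁻¹) :
    ∃ m : ℕ, zseq m = (a m : ℂ) := by
  obtain ⟨u, v, rfl⟩ := hrat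
  obtain ⟨p, q, hq, hpq⟩ := GaussianInt.exists_eq_div_of_rat u v
  exact hurwitz_terminates_of_eq_div hnear hiter hq (hz0.trans hpq)
end
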